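/- arXiv:2108.03017 — 9 statements merged into one kernel-verified Lean document; each statement's English description precedes it below -/
import Mathlib

section
/- Let G be a group, H a subgroup of G of index 2, s an element of G not in H, and ε ∈ {1, −1}. If (ρ, V) is a semisimple finite-dimensional complex representation of H that is ε-self-dual, then the induced representation Ind_H^G ρ of G is ε-self-dual, i.e., the space Ind_H^G V carries a nondegenerate G-invariant bilinear form B satisfying B(y, x) = ε·B(x, y) for all vectors x, y. -/
open LinearMap

section Defs

variable {G : Type} [Group G]

/-- A representation is `ε`-self-dual if it carries a nondegenerate invariant bilinear form `B`
with `B y x = ε * B x y`. -/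
def IsSelfDual {K V : Type} [Group K] [AddCommGroup V] [Module ℂ V]
    (ρ : Representation ℂ K V) (ε : ℂ) : Prop :=
  ∃ B : LinearMap.BilinForm ℂ V, B.Nondegenerate ∧
    (∀ (k : K) (x y : V), B (ρ k x) (ρ k y) = B x y) ∧
    ∀ x y : V, B y x = ε * B x y

/-- A representation `ρ` of an index-two subgroup `H` of `G` is `(ε, s)`-conjugate-dual
(for `s ∈ G - H`) if it carries a nondegenerate bilinear form `B` with
`B (ρ h x) (ρ (s h s⁻¹) y) = B x y` and `B x (ρ (s²) y) = ε * B y x`.  (The membership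
facts `s * h * s⁻¹ ∈ H` and `s * s ∈ H` are automatic when `H` has index two and `s ∉ H`;
they are universally quantified here.) -/
def IsConjDual {V : Type} [AddCommGroup V] [Module ℂ V] (H : Subgroup G)
    (ρ : Representation ℂ H V) (s : G) (ε : ℂ) : Prop :=
  ∃ B : LinearMap.BilinForm ℂ V, B.Nondegenerate ∧
    (∀ (h : H) (hm : s * ↑h * s⁻¹ ∈ H) (x y : V),
      B (ρ h x) (ρ ⟨s * ↑h * s⁻¹, hm⟩ y) = B x y) ∧
    ∀ (hm : s * s ∈ H) (x y : V), B x (ρ ⟨s * s, hm⟩ y) = ε * B y x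

/-- Isomorphism of representations. -/
def RepIso {K : Type} [Group K] {V W : Type} [AddCommGroup V] [Module ℂ V]
    [AddCommGroup W] [Module ℂ W]
    (ρ : Representation ℂ K V) (π : Representation ℂ K W) : Prop :=
  ∃ e : V ≃ₗ[ℂ] W, ∀ (k : K) (x : V), e (ρ k x) = π k (e x)

/-- `ρ^s ≅ ρ`:  the conjugate representation `h ↦ ρ (s h s⁻¹)` is isomorphic to `ρ`. -/
def ConjIsoSelf {V : Type} [AddCommGroup V] [Module ℂ V] (H : Subgroup G)
    (ρ : Representation ℂ H V) (s : G) : Prop :=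
  ∃ e : V ≃ₗ[ℂ] V, ∀ (h : H) (hm : s * ↑h * s⁻¹ ∈ H) (x : V),
    e (ρ ⟨s * ↑h * s⁻¹, hm⟩ x) = ρ h (e x)

/-- Irreducibility of a representation: the space is nonzero and the only invariant
submodules are `⊥` and `⊤`. -/
def IsIrreducibleRep {K V : Type} [Group K] [AddCommGroup V] [Module ℂ V]
    (ρ : Representation ℂ K V) : Prop :=
  Nontrivial V ∧
    ∀ U : Submodule ℂ V, (∀ (k : K) (x : V), x ∈ U → ρ k x ∈ U) → U = ⊥ ∨ U = ⊤

/-- An invariant submodule is irreducible if it is nonzero and has no proper nonzero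
invariant submodule. -/
def IsIrreducibleSubmodule {K V : Type} [Group K] [AddCommGroup V] [Module ℂ V]
    (ρ : Representation ℂ K V) (U : Submodule ℂ V) : Prop :=
  U ≠ ⊥ ∧ ∀ W : Submodule ℂ V, W ≤ U → (∀ (k : K) (x : V), x ∈ W → ρ k x ∈ W) →
    W = ⊥ ∨ W = U

/-- A representation is semisimple if its space is the internal direct sum of a family of
irreducible invariant submodules. -/
def IsSemisimpleRep {K V : Type} [Group K] [AddCommGroup V] [Module ℂ V]
    (ρ : Representation ℂ K V) : Prop :=
  ∃ (ι : Type) (U : ι → Submodule ℂ V),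
    (∀ i, ∀ (k : K) (x : V), x ∈ U i → ρ k x ∈ U i) ∧
    (∀ i, IsIrreducibleSubmodule ρ (U i)) ∧
    (letI := Classical.decEq ι; DirectSum.IsInternal U)

/-- The space of the induced representation `Ind_H^G ρ`: functions `f : G → V` with
`f (h * g) = ρ h (f g)`. -/
def IndCarrier (H : Subgroup G) {V : Type} [AddCommGroup V] [Module ℂ V]
    (ρ : Representation ℂ H V) : Submodule ℂ (G → V) where
  carrier := {f | ∀ (h : H) (g : G), f (↑h * g) = ρ h (f g)}
  add_mem' := by
    intro f g hf hg h x
    simp [hf h x, hg h x]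
  zero_mem' := by intro h x; simp
  smul_mem' := by
    intro c f hf h x
    simp [hf h x]

/-- The induced representation `Ind_H^G ρ`, with `G` acting by right translation. -/
def IndRep (H : Subgroup G) {V : Type} [AddCommGroup V] [Module ℂ V]
    (ρ : Representation ℂ H V) : Representation ℂ G (IndCarrier H ρ) where
  toFun g :=
    { toFun := fun f => ⟨fun x => (f : G → V) (x * g), fun h x => by
        simpa [mul_assoc] using f.2 h (x * g)⟩
      map_add' := fun f f' => by ext x; simp
      map_smul' := fun c f => by ext x; simp }
  map_one' := by
    ext f x
    simp
  map_mul' g g' := by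
    ext f x
    simp [mul_assoc]

end Defs

/-- If `ρ` is a semisimple finite-dimensional complex representation of an
index-two subgroup `H` of `G` which is `ε`-self-dual (`ε ∈ {1, -1}`), then the induced
representation `Ind_H^G ρ` is `ε`-self-dual. -/
theorem ind_isSelfDual_of_isSelfDual {G V : Type} [Group G] [AddCommGroup V] [Module ℂ V]
    [FiniteDimensional ℂ V] (H : Subgroup G) (hH : H.index = 2) (s : G) (hs : s ∉ H)
    (ε : ℂ) (hε : ε = 1 ∨ ε = -1) (ρ : Representation ℂ H V)
    (hss : IsSemisimpleRep ρ) (hsd : IsSelfDual ρ ε) :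
    IsSelfDual (IndRep H ρ) ε := by
  classical
  obtain ⟨B, hBnd, hBinv, hBsym⟩ := hsd
  have hval : ∀ (f : IndCarrier H ρ) (h : H) (g : G),
      (f : G → V) (↑h * g) = ρ h ((f : G → V) g) := fun f => f.2
  have hmem : ∀ a b : G, a * b ∈ H ↔ (a ∈ H ↔ b ∈ H) := fun a b =>
    Subgroup.mul_mem_iff_of_index_two hH
  have hsinv : s⁻¹ ∉ H := fun h => hs (by simpa using H.inv_mem h)
  -- value of f at an arbitrary point in terms of f 1 and f s
  have hvalH : ∀ (f : IndCarrier H ρ) (g : G) (hg : g ∈ H),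
      (f : G → V) g = ρ ⟨g, hg⟩ ((f : G → V) 1) := by
    intro f g hg
    have := hval f ⟨g, hg⟩ 1
    simpa using this
  have hvalS : ∀ (f : IndCarrier H ρ) (g : G) (hg : g * s⁻¹ ∈ H),
      (f : G → V) g = ρ ⟨g * s⁻¹, hg⟩ ((f : G → V) s) := by
    intro f g hg
    have := hval f ⟨g * s⁻¹, hg⟩ s
    simpa [mul_assoc] using this
  refine ⟨LinearMap.mk₂ ℂ
    (fun f g => B ((f : G → V) 1) ((g : G → V) 1) + B ((f : G → V) s) ((g : G → V) s))
    (fun f f' g => by simp; ring) (fun c f g => by simp; ring)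
    (fun f g g' => by simp; ring) (fun c f g => by simp; ring), ?_, ?_, ?_⟩
  · -- nondegeneracy
    refine (LinearMap.IsRefl.nondegenerate_iff_separatingLeft ?_).2 ?_
    · intro f g hfg
      simp only [LinearMap.mk₂_apply] at hfg ⊢
      rw [hBsym, hBsym ((f : G → V) s), ← mul_add, hfg, mul_zero]
    intro f hf
    have h1 : (f : G → V) 1 = 0 := by
      apply hBnd.1
      intro v
      -- test function supported on H
      have hmem1 : (fun x => if hx : x ∈ H then ρ ⟨x, hx⟩ v else 0) ∈ IndCarrier H ρ := by
        intro h x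
        by_cases hx : x ∈ H
        · have hhx : ↑h * x ∈ H := H.mul_mem h.2 hx
          simp only [dif_pos hx, dif_pos hhx]
          have : (⟨↑h * x, hhx⟩ : H) = h * ⟨x, hx⟩ := rfl
          rw [this, map_mul]
          rfl
        · have hhx : ↑h * x ∉ H := fun hc => hx (by
            have := H.mul_mem (H.inv_mem h.2) hc
            simpa [mul_assoc] using this)
          simp [dif_neg hx, dif_neg hhx]
      have := hf ⟨_, hmem1⟩
      simp only [LinearMap.mk₂_apply] at this
      have h1H : (1 : G) ∈ H := H.one_mem
      rw [dif_pos h1H, dif_neg hs] at this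
      simpa [show (⟨(1:G), h1H⟩ : H) = 1 from rfl] using this
    have h2 : (f : G → V) s = 0 := by
      apply hBnd.1
      intro w
      -- test function supported on the coset H s
      have hmem2 : (fun x => if hx : x * s⁻¹ ∈ H then ρ ⟨x * s⁻¹, hx⟩ w else 0)
          ∈ IndCarrier H ρ := by
        intro h x
        by_cases hx : x * s⁻¹ ∈ H
        · have hhx : (↑h * x) * s⁻¹ ∈ H := by
            rw [mul_assoc]; exact H.mul_mem h.2 hx
          simp only [dif_pos hx, dif_pos hhx]
          have : (⟨(↑h * x) * s⁻¹, hhx⟩ : H) = h * ⟨x * s⁻¹, hx⟩ := by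
            ext; simp [mul_assoc]
          rw [this, map_mul]
          rfl
        · have hhx : (↑h * x) * s⁻¹ ∉ H := fun hc => hx (by
            have := H.mul_mem (H.inv_mem h.2) hc
            simpa [mul_assoc] using this)
          simp [dif_neg hx, dif_neg hhx]
      have := hf ⟨_, hmem2⟩
      simp only [LinearMap.mk₂_apply] at this
      have hss' : s * s⁻¹ ∈ H := by simp [H.one_mem]
      have h1s : (1 : G) * s⁻¹ ∉ H := by simpa using hsinv
      rw [dif_neg h1s, dif_pos hss'] at this
      rw [show (⟨s * s⁻¹, hss'⟩ : H) = 1 from Subtype.ext (mul_inv_cancel s), map_one] at this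
      simpa [h1] using this
    ext x
    by_cases hx : x ∈ H
    · rw [hvalH f x hx, h1, map_zero]; rfl
    · have hx' : x * s⁻¹ ∈ H := (hmem x s⁻¹).2 (iff_of_false hx hsinv)
      rw [hvalS f x hx', h2, map_zero]; rfl
  · -- invariance
    intro k f f'
    have hind : ∀ (g : IndCarrier H ρ) (x : G),
        ((IndRep H ρ k g : IndCarrier H ρ) : G → V) x = (g : G → V) (x * k) := fun g x => rfl
    simp only [LinearMap.mk₂_apply, hind, one_mul]
    by_cases hk : k ∈ H
    · have hsk : s * k ∉ H := fun hc => hs (by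
        have := H.mul_mem hc (H.inv_mem hk)
        simpa [mul_assoc] using this)
      have hsks : (s * k) * s⁻¹ ∈ H := (hmem _ _).2 (iff_of_false hsk hsinv)
      rw [hvalH f k hk, hvalH f' k hk, hvalS f (s * k) hsks, hvalS f' (s * k) hsks,
        hBinv, hBinv]
    · have hk' : k * s⁻¹ ∈ H := (hmem k s⁻¹).2 (iff_of_false hk hsinv)
      have hsk : s * k ∈ H := (hmem s k).2 (iff_of_false hs hk)
      rw [hvalS f k hk', hvalS f' k hk', hvalH f (s * k) hsk, hvalH f' (s * k) hsk,
        hBinv, hBinv, add_comm]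
  · -- symmetry
    intro f g
    simp only [LinearMap.mk₂_apply]
    rw [hBsym, hBsym ((f : G → V) s)]
    ring
end

section
/- Let G be a group, H a subgroup of G of index 2, s an element of G not in H, and ε ∈ {1, −1}. If (ρ, V) is a semisimple finite-dimensional complex representation of H that is (ε, s)-conjugate-dual, then the induced representation Ind_H^G ρ of G is ε-self-dual, i.e., the space Ind_H^G V carries a nondegenerate G-invariant bilinear form B satisfying B(y, x) = ε·B(x, y) for all vectors x, y. -/
open LinearMap

/-- If `ρ` is a semisimple finite-dimensional complex representation of an
index-two subgroup `H` of `G` which is `(ε, s)`-conjugate-dual (`ε ∈ {1, -1}`, `s ∈ G - H`),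
then the induced representation `Ind_H^G ρ` is `ε`-self-dual. -/
theorem ind_isSelfDual_of_isConjDual {G V : Type} [Group G] [AddCommGroup V] [Module ℂ V]
    [FiniteDimensional ℂ V] (H : Subgroup G) (hH : H.index = 2) (s : G) (hs : s ∉ H)
    (ε : ℂ) (hε : ε = 1 ∨ ε = -1) (ρ : Representation ℂ H V)
    (hss : IsSemisimpleRep ρ) (hcd : IsConjDual H ρ s ε) :
    IsSelfDual (IndRep H ρ) ε := by
  classical
  obtain ⟨B, hBnd, hBinv, hBs⟩ := hcd
  have hε2 : ε * ε = 1 := by rcases hε with h | h <;> simp [h]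
  have hsinv : s⁻¹ ∉ H := fun hh => hs (by simpa using H.inv_mem hh)
  have hss2 : s * s ∈ H := Subgroup.mul_self_mem_of_index_two hH s
  have hconj : ∀ g : G, g ∈ H → s * g * s⁻¹ ∈ H := by
    intro g hg
    rw [Subgroup.mul_mem_iff_of_index_two hH, Subgroup.mul_mem_iff_of_index_two hH]
    tauto
  have hcos : ∀ g : G, g ∉ H → g * s⁻¹ ∈ H := by
    intro g hg
    rw [Subgroup.mul_mem_iff_of_index_two hH]
    tauto
  have hsmul : ∀ g : G, g ∉ H → s * g ∈ H := by
    intro g hg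
    rw [Subgroup.mul_mem_iff_of_index_two hH]
    tauto
  -- key computation rule for the second cosets
  have key : ∀ (g : G) (hg : g ∉ H) (x y : V),
      B (ρ ⟨g * s⁻¹, hcos g hg⟩ x) (ρ ⟨s * g, hsmul g hg⟩ y) = ε * B y x := by
    intro g hg x y
    have hc : s * (g * s⁻¹) * s⁻¹ ∈ H := hconj _ (hcos g hg)
    have he : (⟨s * g, hsmul g hg⟩ : H) = ⟨s * (g * s⁻¹) * s⁻¹, hc⟩ * ⟨s * s, hss2⟩ :=
      Subtype.ext (by push_cast; group)
    rw [he, map_mul, Module.End.mul_apply, hBinv ⟨g * s⁻¹, hcos g hg⟩ hc, hBs]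
  -- the bilinear form on the induced space
  refine ⟨LinearMap.mk₂ ℂ
    (fun f f' => B ((f : G → V) 1) ((f' : G → V) s) + ε * B ((f' : G → V) 1) ((f : G → V) s))
    (by intro m₁ m₂ n
        simp only [Submodule.coe_add, Pi.add_apply, map_add, LinearMap.add_apply]; ring)
    (by intro c m n
        simp only [SetLike.val_smul, Pi.smul_apply, map_smul, LinearMap.smul_apply,
          smul_eq_mul]; ring)
    (by intro m n₁ n₂
        simp only [Submodule.coe_add, Pi.add_apply, map_add, LinearMap.add_apply]; ring)
    (by intro c m n
        simp only [SetLike.val_smul, Pi.smul_apply, map_smul, LinearMap.smul_apply,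
          smul_eq_mul]; ring), ?_, ?_, ?_⟩
  · -- nondegeneracy
    refine (LinearMap.IsRefl.nondegenerate_iff_separatingLeft (by
      intro x y hxy
      simp only [LinearMap.mk₂_apply] at hxy ⊢
      linear_combination ε * hxy - (B ((y : G → V) 1) ((x : G → V) s)) * hε2)).2 ?_
    intro f hf
    simp only [LinearMap.mk₂_apply] at hf
    -- build elements of the induced space with prescribed values at 1 and s
    have mk : ∀ a b : V, ∃ F : IndCarrier H ρ, (F : G → V) 1 = a ∧ (F : G → V) s = b := by
      intro a b
      refine ⟨⟨fun g => if hg : g ∈ H then ρ ⟨g, hg⟩ a else ρ ⟨g * s⁻¹, hcos g hg⟩ b, ?_⟩,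
        ?_, ?_⟩
      · intro h g
        dsimp only
        by_cases hg : g ∈ H
        · have hhg : (↑h : G) * g ∈ H := H.mul_mem h.2 hg
          rw [dif_pos hhg, dif_pos hg,
            show (⟨(↑h : G) * g, hhg⟩ : H) = h * ⟨g, hg⟩ from rfl, map_mul,
            Module.End.mul_apply]
        · have hhg : (↑h : G) * g ∉ H := fun hmem => hg (by
            have := H.mul_mem (H.inv_mem h.2) hmem
            simpa [mul_assoc] using this)
          rw [dif_neg hhg, dif_neg hg,
            show (⟨(↑h : G) * g * s⁻¹, hcos _ hhg⟩ : H) = h * ⟨g * s⁻¹, hcos g hg⟩ from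
              Subtype.ext (by push_cast; group), map_mul, Module.End.mul_apply]
      · show (if hg : (1:G) ∈ H then ρ ⟨1, hg⟩ a else ρ ⟨1 * s⁻¹, hcos 1 hg⟩ b) = a
        rw [dif_pos H.one_mem, show (⟨(1 : G), H.one_mem⟩ : H) = 1 from rfl, map_one]
        rfl
      · show (if hg : s ∈ H then ρ ⟨s, hg⟩ a else ρ ⟨s * s⁻¹, hcos s hg⟩ b) = b
        rw [dif_neg hs,
          show (⟨s * s⁻¹, hcos s hs⟩ : H) = 1 from Subtype.ext (by simp), map_one]
        rfl
    -- f 1 = 0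
    have h1 : (f : G → V) 1 = 0 := by
      apply hBnd.1
      intro b
      obtain ⟨F, hF1, hFs⟩ := mk 0 b
      have := hf F
      rw [hF1, hFs] at this
      simpa using this
    -- f s = 0
    have hs0 : (f : G → V) s = 0 := by
      have hBr : ∀ a : V, B a ((f : G → V) s) = 0 := by
        intro a
        obtain ⟨F, hF1, hFs⟩ := mk a 0
        have := hf F
        rw [hF1, hFs] at this
        simp only [map_zero, zero_add] at this
        have hεne : ε ≠ 0 := by rcases hε with h | h <;> simp [h]
        exact (mul_eq_zero.1 this).resolve_left hεne
      apply hBnd.1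
      intro y
      have hy : ρ ⟨s * s, hss2⟩ ((ρ (⟨s * s, hss2⟩ : H)⁻¹) y) = y := by
        rw [← Module.End.mul_apply, ← map_mul]
        simp
      calc B ((f : G → V) s) y
          = B ((f : G → V) s) (ρ ⟨s * s, hss2⟩ ((ρ (⟨s * s, hss2⟩ : H)⁻¹) y)) := by rw [hy]
        _ = ε * B ((ρ (⟨s * s, hss2⟩ : H)⁻¹) y) ((f : G → V) s) := hBs hss2 _ _
        _ = 0 := by rw [hBr, mul_zero]
    -- conclude f = 0
    ext g
    by_cases hg : g ∈ H
    · have := f.2 ⟨g, hg⟩ 1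
      rw [mul_one] at this
      simp [this, h1]
    · have := f.2 ⟨g * s⁻¹, hcos g hg⟩ s
      rw [show (↑(⟨g * s⁻¹, hcos g hg⟩ : H) : G) * s = g by group] at this
      simp [this, hs0]
  · -- invariance
    intro g f f'
    simp only [LinearMap.mk₂_apply]
    have ev : ∀ (f : IndCarrier H ρ) (x : G), ((IndRep H ρ g f : IndCarrier H ρ) : G → V) x
        = (f : G → V) (x * g) := fun _ _ => rfl
    by_cases hg : g ∈ H
    · have e1 : ∀ (f : IndCarrier H ρ), (f : G → V) (1 * g) = ρ ⟨g, hg⟩ ((f : G → V) 1) := by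
        intro f
        have := f.2 ⟨g, hg⟩ 1
        rw [mul_one] at this
        rw [one_mul, this]
      have es : ∀ (f : IndCarrier H ρ),
          (f : G → V) (s * g) = ρ ⟨s * g * s⁻¹, hconj g hg⟩ ((f : G → V) s) := by
        intro f
        have := f.2 ⟨s * g * s⁻¹, hconj g hg⟩ s
        rw [show (↑(⟨s * g * s⁻¹, hconj g hg⟩ : H) : G) * s = s * g by group] at this
        rw [this]
      rw [ev, ev, ev, ev, e1, e1, es, es, hBinv ⟨g, hg⟩ (hconj g hg),
        hBinv ⟨g, hg⟩ (hconj g hg)]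
    · have e1 : ∀ (f : IndCarrier H ρ),
          (f : G → V) (1 * g) = ρ ⟨g * s⁻¹, hcos g hg⟩ ((f : G → V) s) := by
        intro f
        have := f.2 ⟨g * s⁻¹, hcos g hg⟩ s
        rw [show (↑(⟨g * s⁻¹, hcos g hg⟩ : H) : G) * s = g by group] at this
        rw [one_mul, this]
      have es : ∀ (f : IndCarrier H ρ),
          (f : G → V) (s * g) = ρ ⟨s * g, hsmul g hg⟩ ((f : G → V) 1) := by
        intro f
        have := f.2 ⟨s * g, hsmul g hg⟩ 1
        rw [mul_one] at this
        rw [this]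
      rw [ev, ev, ev, ev, e1, e1, es, es, key g hg, key g hg]
      linear_combination (B ((f : G → V) 1) ((f' : G → V) s)) * hε2
  · -- ε-symmetry
    intro x y
    simp only [LinearMap.mk₂_apply]
    linear_combination (- B ((y : G → V) 1) ((x : G → V) s)) * hε2
end

section
/- Let G be a group, H a subgroup of G of index 2, s an element of G not in H, and ε ∈ {1, −1}. Let (ρ, V) be an irreducible finite-dimensional complex representation of H such that ρ^s is not isomorphic to ρ, and suppose that the induced representation Ind_H^G ρ is ε-self-dual. Then exactly one of the following holds: ρ is ε-self-dual, or ρ is (ε, s)-conjugate-dual (but not both together). -/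
open LinearMap

section Schur

open Function

variable {K V W : Type} [Group K] [AddCommGroup V] [Module ℂ V] [AddCommGroup W] [Module ℂ W]

lemma schur_pair (ρ : Representation ℂ K V) (σ : Representation ℂ K W)
    (hρ : ∀ U : Submodule ℂ V, (∀ (k : K) (x : V), x ∈ U → ρ k x ∈ U) → U = ⊥ ∨ U = ⊤)
    (hσ : ∀ U : Submodule ℂ W, (∀ (k : K) (x : W), x ∈ U → σ k x ∈ U) → U = ⊥ ∨ U = ⊤)
    (C : V →ₗ[ℂ] W →ₗ[ℂ] ℂ)
    (hinv : ∀ (k : K) (x : V) (y : W), C (ρ k x) (σ k y) = C x y)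
    (hC : C ≠ 0) : Function.Injective C ∧ Function.Injective C.flip := by
  have hσc : ∀ (k : K) (y : W), σ k (σ k⁻¹ y) = y := by
    intro k y
    rw [← Module.End.mul_apply, ← map_mul, mul_inv_cancel, map_one, Module.End.one_apply]
  have hρc : ∀ (k : K) (x : V), ρ k (ρ k⁻¹ x) = x := by
    intro k x
    rw [← Module.End.mul_apply, ← map_mul, mul_inv_cancel, map_one, Module.End.one_apply]
  have hcan : ∀ (k : K) (x : V) (y : W), C (ρ k x) y = C x (σ k⁻¹ y) := by
    intro k x y
    conv_lhs => rw [← hσc k y]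
    exact hinv k x (σ k⁻¹ y)
  have hcan' : ∀ (k : K) (x : V) (y : W), C x (σ k y) = C (ρ k⁻¹ x) y := by
    intro k x y
    conv_lhs => rw [← hρc k x]
    exact hinv k (ρ k⁻¹ x) y
  constructor
  · rw [← LinearMap.ker_eq_bot]
    rcases hρ (LinearMap.ker C) (fun k x hx => by
      rw [LinearMap.mem_ker] at hx ⊢
      ext y
      rw [LinearMap.zero_apply, hcan, hx, LinearMap.zero_apply]) with h | h
    · exact h
    · exact absurd (LinearMap.ext fun x => by
        simpa using (LinearMap.mem_ker).mp (h ▸ Submodule.mem_top (x := x))) hC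
  · rw [← LinearMap.ker_eq_bot]
    rcases hσ (LinearMap.ker C.flip) (fun k y hy => by
      rw [LinearMap.mem_ker] at hy ⊢
      ext x
      rw [LinearMap.zero_apply, LinearMap.flip_apply, hcan', ← LinearMap.flip_apply, hy,
        LinearMap.zero_apply]) with h | h
    · exact h
    · refine absurd (LinearMap.ext fun x => LinearMap.ext fun y => ?_) hC
      have : C.flip y = 0 := (LinearMap.mem_ker).mp (h ▸ Submodule.mem_top (x := y))
      simpa using DFunLike.congr_fun this x

lemma pairings_equiv [FiniteDimensional ℂ V] (ρ σ : Representation ℂ K V)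
    (C D : V →ₗ[ℂ] Module.Dual ℂ V)
    (hCinj : Injective C) (hDinj : Injective D)
    (hCinv : ∀ (k : K) (x y : V), C (ρ k x) (ρ k y) = C x y)
    (hDinv : ∀ (k : K) (x y : V), D (σ k x) (ρ k y) = D x y) :
    ∃ e : V ≃ₗ[ℂ] V, ∀ (k : K) (x : V), e (σ k x) = ρ k (e x) := by
  have hfr : Module.finrank ℂ V = Module.finrank ℂ (Module.Dual ℂ V) :=
    Subspace.dual_finrank_eq.symm
  have hCsurj := (LinearMap.injective_iff_surjective_of_finrank_eq_finrank hfr).mp hCinj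
  have hDsurj := (LinearMap.injective_iff_surjective_of_finrank_eq_finrank hfr).mp hDinj
  let Ce := LinearEquiv.ofBijective C ⟨hCinj, hCsurj⟩
  let De := LinearEquiv.ofBijective D ⟨hDinj, hDsurj⟩
  have hkey : ∀ z : V, C (Ce.symm (D z)) = D z := fun z => Ce.apply_symm_apply (D z)
  have hρc : ∀ (k : K) (x : V), ρ k (ρ k⁻¹ x) = x := by
    intro k x
    rw [← Module.End.mul_apply, ← map_mul, mul_inv_cancel, map_one, Module.End.one_apply]
  refine ⟨De.trans Ce.symm, fun k x => ?_⟩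
  apply hCinj
  simp only [LinearEquiv.trans_apply]
  have hDe : ∀ z : V, De z = D z := fun z => rfl
  rw [hDe, hDe, hkey]
  ext y
  have h1 : D (σ k x) y = D x (ρ k⁻¹ y) := by
    conv_lhs => rw [← hρc k y]
    exact hDinv k x (ρ k⁻¹ y)
  have h2 : C (ρ k (Ce.symm (D x))) y = C (Ce.symm (D x)) (ρ k⁻¹ y) := by
    conv_lhs => rw [← hρc k y]
    exact hCinv k _ (ρ k⁻¹ y)
  rw [h1, h2]
  exact (DFunLike.congr_fun (hkey x) _).symm

end Schur


section EMach

open Function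

variable {G V : Type} [Group G] [AddCommGroup V] [Module ℂ V]
variable (H : Subgroup G) (ρ : Representation ℂ H V) (s : G)

open Classical in
/-- Embedding of `V` onto the functions supported on `H`. -/
noncomputable def E1 : V →ₗ[ℂ] IndCarrier H ρ where
  toFun x := ⟨fun g => if hg : g ∈ H then ρ ⟨g, hg⟩ x else 0, by
    intro h g
    beta_reduce
    by_cases hg : g ∈ H
    · have hg' : ↑h * g ∈ H := mul_mem h.2 hg
      rw [dif_pos hg, dif_pos hg']
      have he : (⟨↑h * g, hg'⟩ : H) = h * ⟨g, hg⟩ := rfl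
      rw [he, map_mul]
      rfl
    · have hg' : ↑h * g ∉ H := fun hmem => hg (by
        simpa using mul_mem (inv_mem h.2) hmem)
      rw [dif_neg hg, dif_neg hg', map_zero]⟩
  map_add' x y := by
    apply Subtype.ext
    funext g
    by_cases hg : g ∈ H <;> simp [hg]
  map_smul' c x := by
    apply Subtype.ext
    funext g
    by_cases hg : g ∈ H <;> simp [hg]

open Classical in
/-- Embedding of `V` onto the functions supported on `H * s`. -/
noncomputable def E2 : V →ₗ[ℂ] IndCarrier H ρ where
  toFun x := ⟨fun g => if hg : g * s⁻¹ ∈ H then ρ ⟨g * s⁻¹, hg⟩ x else 0, by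
    intro h g
    beta_reduce
    simp only [mul_assoc]
    by_cases hg : g * s⁻¹ ∈ H
    · have hg' : ↑h * (g * s⁻¹) ∈ H := mul_mem h.2 hg
      rw [dif_pos hg, dif_pos hg']
      have he : (⟨↑h * (g * s⁻¹), hg'⟩ : H) = h * ⟨g * s⁻¹, hg⟩ := rfl
      rw [he, map_mul]
      rfl
    · have hg' : ↑h * (g * s⁻¹) ∉ H := fun hmem => hg (by
        simpa using mul_mem (inv_mem h.2) hmem)
      rw [dif_neg hg, dif_neg hg', map_zero]⟩
  map_add' x y := by
    apply Subtype.ext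
    funext g
    by_cases hg : g * s⁻¹ ∈ H <;> simp [hg]
  map_smul' c x := by
    apply Subtype.ext
    funext g
    by_cases hg : g * s⁻¹ ∈ H <;> simp [hg]

variable {H ρ s}

open Classical in
lemma E1_coe (x : V) (g : G) :
    ((E1 H ρ x : IndCarrier H ρ) : G → V) g
      = if hg : g ∈ H then ρ ⟨g, hg⟩ x else 0 := rfl

open Classical in
lemma E2_coe (x : V) (g : G) :
    ((E2 H ρ s x : IndCarrier H ρ) : G → V) g
      = if hg : g * s⁻¹ ∈ H then ρ ⟨g * s⁻¹, hg⟩ x else 0 := rfl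

lemma IndRep_coe (g : G) (f : IndCarrier H ρ) (x : G) :
    ((IndRep H ρ g f : IndCarrier H ρ) : G → V) x = (f : G → V) (x * g) := rfl

lemma E1_apply_one (x : V) : ((E1 H ρ x : IndCarrier H ρ) : G → V) 1 = x := by
  rw [E1_coe, dif_pos (one_mem H)]
  have : (⟨(1 : G), one_mem H⟩ : H) = 1 := rfl
  rw [this, map_one, Module.End.one_apply]

lemma E1_conj (h : H) (x : V) :
    IndRep H ρ ↑h (E1 H ρ x) = E1 H ρ (ρ h x) := by
  apply Subtype.ext
  funext g
  rw [IndRep_coe, E1_coe, E1_coe]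
  by_cases hg : g ∈ H
  · have hg' : g * ↑h ∈ H := mul_mem hg h.2
    rw [dif_pos hg, dif_pos hg']
    have he : (⟨g * ↑h, hg'⟩ : H) = ⟨g, hg⟩ * h := rfl
    rw [he, map_mul]
    rfl
  · have hg' : g * ↑h ∉ H := fun hmem => hg (by
      simpa using mul_mem hmem (inv_mem h.2))
    rw [dif_neg hg, dif_neg hg']

lemma E2_conj (h : H) (hm : s * ↑h * s⁻¹ ∈ H) (x : V) :
    IndRep H ρ ↑h (E2 H ρ s x) = E2 H ρ s (ρ ⟨s * ↑h * s⁻¹, hm⟩ x) := by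
  apply Subtype.ext
  funext g
  rw [IndRep_coe, E2_coe, E2_coe]
  by_cases hg : g * s⁻¹ ∈ H
  · have hg' : g * ↑h * s⁻¹ ∈ H := by
      have : g * ↑h * s⁻¹ = (g * s⁻¹) * (s * ↑h * s⁻¹) := by group
      rw [this]
      exact mul_mem hg hm
    rw [dif_pos hg', dif_pos hg]
    have he : (⟨g * ↑h * s⁻¹, hg'⟩ : H) = ⟨g * s⁻¹, hg⟩ * ⟨s * ↑h * s⁻¹, hm⟩ :=
      Subtype.ext (by push_cast; group)
    rw [he, map_mul]
    rfl
  · have hg' : g * ↑h * s⁻¹ ∉ H := fun hmem => hg (by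
      have : g * s⁻¹ = (g * ↑h * s⁻¹) * (s * ↑h * s⁻¹)⁻¹ := by group
      rw [this]
      exact mul_mem hmem (inv_mem hm))
    rw [dif_neg hg, dif_neg hg']

lemma E2_s (x : V) : IndRep H ρ s (E2 H ρ s x) = E1 H ρ x := by
  apply Subtype.ext
  funext g
  rw [IndRep_coe, E2_coe, E1_coe]
  by_cases hg : g ∈ H
  · have hg' : g * s * s⁻¹ ∈ H := by simpa using hg
    rw [dif_pos hg', dif_pos hg]
    have he : (⟨g * s * s⁻¹, hg'⟩ : H) = ⟨g, hg⟩ := Subtype.ext (by group)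
    rw [he]
  · have hg' : g * s * s⁻¹ ∉ H := by simpa using hg
    rw [dif_neg hg', dif_neg hg]

lemma E1_s (hss : s * s ∈ H) (x : V) :
    IndRep H ρ s (E1 H ρ x) = E2 H ρ s (ρ ⟨s * s, hss⟩ x) := by
  apply Subtype.ext
  funext g
  rw [IndRep_coe, E1_coe, E2_coe]
  by_cases hg : g * s⁻¹ ∈ H
  · have hg' : g * s ∈ H := by
      have : g * s = (g * s⁻¹) * (s * s) := by group
      rw [this]
      exact mul_mem hg hss
    rw [dif_pos hg', dif_pos hg]
    have he : (⟨g * s, hg'⟩ : H) = ⟨g * s⁻¹, hg⟩ * ⟨s * s, hss⟩ := Subtype.ext (by push_cast; group)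
    rw [he, map_mul]
    rfl
  · have hg' : g * s ∉ H := fun hmem => hg (by
      have : g * s⁻¹ = (g * s) * (s * s)⁻¹ := by group
      rw [this]
      exact mul_mem hmem (inv_mem hss))
    rw [dif_neg hg, dif_neg hg']

lemma E_decomp (hH : H.index = 2) (hs : s ∉ H) (f : IndCarrier H ρ) :
    f = E1 H ρ ((f : G → V) 1) + E2 H ρ s ((f : G → V) s) := by
  have hsi : s⁻¹ ∉ H := fun h => hs (by simpa using h)
  apply Subtype.ext
  funext g
  have hadd : ((E1 H ρ ((f : G → V) 1) + E2 H ρ s ((f : G → V) s) : IndCarrier H ρ) : G → V) g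
      = ((E1 H ρ ((f : G → V) 1) : IndCarrier H ρ) : G → V) g
        + ((E2 H ρ s ((f : G → V) s) : IndCarrier H ρ) : G → V) g := rfl
  rw [hadd, E1_coe, E2_coe]
  by_cases hg : g ∈ H
  · have hg' : g * s⁻¹ ∉ H := by
      rw [Subgroup.mul_mem_iff_of_index_two hH]
      simp [hg, hsi]
    rw [dif_pos hg, dif_neg hg', add_zero]
    have := f.2 ⟨g, hg⟩ 1
    rw [mul_one] at this
    exact this
  · have hg' : g * s⁻¹ ∈ H := by
      rw [Subgroup.mul_mem_iff_of_index_two hH]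
      simp [hg, hsi]
    rw [dif_neg hg, dif_pos hg', zero_add]
    have := f.2 ⟨g * s⁻¹, hg'⟩ s
    have he : (↑(⟨g * s⁻¹, hg'⟩ : H) : G) * s = g := by
      show g * s⁻¹ * s = g
      group
    rw [he] at this
    exact this

/-- The conjugate representation `ρ^s`. -/
def conjRep (hc : ∀ h : H, s * ↑h * s⁻¹ ∈ H) : Representation ℂ H V :=
  ρ.comp
    { toFun := fun h => ⟨s * ↑h * s⁻¹, hc h⟩
      map_one' := Subtype.ext (by simp)
      map_mul' := fun a b => Subtype.ext (by push_cast; group) }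

lemma conjRep_apply (hc : ∀ h : H, s * ↑h * s⁻¹ ∈ H) (h : H) (x : V) :
    conjRep (ρ := ρ) hc h x = ρ ⟨s * ↑h * s⁻¹, hc h⟩ x := rfl

end EMach

/-- Let `ρ` be an irreducible finite-dimensional complex representation of an
index-two subgroup `H` of `G` with `ρ^s ≇ ρ` (`s ∈ G - H`), and suppose `Ind_H^G ρ` is
`ε`-self-dual (`ε ∈ {1, -1}`). Then exactly one of the following holds: `ρ` is `ε`-self-dual,
or `ρ` is `(ε, s)`-conjugate-dual, but not both. -/
theorem isSelfDual_xor_isConjDual_of_ind_isSelfDual {G V : Type} [Group G] [AddCommGroup V]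
    [Module ℂ V] [FiniteDimensional ℂ V] (H : Subgroup G) (hH : H.index = 2)
    (s : G) (hs : s ∉ H) (ε : ℂ) (hε : ε = 1 ∨ ε = -1) (ρ : Representation ℂ H V)
    (hirr : IsIrreducibleRep ρ) (hns : ¬ ConjIsoSelf H ρ s)
    (hind : IsSelfDual (IndRep H ρ) ε) :
    Xor' (IsSelfDual ρ ε) (IsConjDual H ρ s ε) := by
  classical
  obtain ⟨hNT, hirrU⟩ := hirr
  obtain ⟨B, hBnd, hBinv, hBsym⟩ := hind
  have hε2 : ε * ε = 1 := by rcases hε with h | h <;> simp [h]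
  have hsi : s⁻¹ ∉ H := fun h => hs (by simpa using h)
  have hss : s * s ∈ H := Subgroup.mul_self_mem_of_index_two hH s
  have hconj : ∀ h : H, s * ↑h * s⁻¹ ∈ H := by
    intro h
    rw [Subgroup.mul_mem_iff_of_index_two hH, Subgroup.mul_mem_iff_of_index_two hH]
    simp [hs, hsi, h.2]
  set σ : Representation ℂ H V := conjRep (ρ := ρ) (s := s) hconj with hσ
  have hσapp : ∀ (h : H) (x : V), σ h x = ρ ⟨s * ↑h * s⁻¹, hconj h⟩ x := fun h x => rfl
  have hσirr : ∀ U : Submodule ℂ V, (∀ (k : H) (x : V), x ∈ U → σ k x ∈ U) → U = ⊥ ∨ U = ⊤ := by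
    intro U hU
    apply hirrU U
    intro k x hx
    have hk1 : s⁻¹ * ↑k ∉ H := by
      rw [Subgroup.mul_mem_iff_of_index_two hH]
      simp [hsi, k.2]
    have hk' : s⁻¹ * ↑k * s ∈ H := by
      rw [Subgroup.mul_mem_iff_of_index_two hH]
      simp [hk1, hs]
    have he : (⟨s * ↑(⟨s⁻¹ * ↑k * s, hk'⟩ : H) * s⁻¹, hconj _⟩ : H) = k :=
      Subtype.ext (by push_cast; group)
    have hres := hU ⟨s⁻¹ * ↑k * s, hk'⟩ x hx
    rw [hσapp, he] at hres
    exact hres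
  set C11 : LinearMap.BilinForm ℂ V := B.compl₁₂ (E1 H ρ) (E1 H ρ) with hC11
  set C12 : LinearMap.BilinForm ℂ V := B.compl₁₂ (E1 H ρ) (E2 H ρ s) with hC12def
  have hC11a : ∀ x y : V, C11 x y = B (E1 H ρ x) (E1 H ρ y) := fun x y => rfl
  have hC12a : ∀ x y : V, C12 x y = B (E1 H ρ x) (E2 H ρ s y) := fun x y => rfl
  have hC11inv : ∀ (k : H) (x y : V), C11 (ρ k x) (ρ k y) = C11 x y := by
    intro k x y
    rw [hC11a, hC11a, ← E1_conj, ← E1_conj]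
    exact hBinv ↑k _ _
  have hC12inv : ∀ (k : H) (x y : V), C12 (ρ k x) (σ k y) = C12 x y := by
    intro k x y
    rw [hC12a, hC12a, hσapp, ← E1_conj, ← E2_conj k (hconj k)]
    exact hBinv ↑k _ _
  have hC11sym : ∀ x y : V, C11 y x = ε * C11 x y := fun x y => hBsym _ _
  have hC12tw : ∀ (hm : s * s ∈ H) (x y : V), C12 x (ρ ⟨s * s, hm⟩ y) = ε * C12 y x := by
    intro hm x y
    rw [hC12a, hC12a]
    calc B (E1 H ρ x) (E2 H ρ s (ρ ⟨s * s, hm⟩ y))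
        = ε * (ε * B (E1 H ρ x) (E2 H ρ s (ρ ⟨s * s, hm⟩ y))) := by
          rw [← mul_assoc, hε2, one_mul]
      _ = ε * B (E2 H ρ s (ρ ⟨s * s, hm⟩ y)) (E1 H ρ x) := by rw [← hBsym]
      _ = ε * B (IndRep H ρ s (E1 H ρ y)) (IndRep H ρ s (E2 H ρ s x)) := by
          rw [E1_s hm, E2_s]
      _ = ε * B (E1 H ρ y) (E2 H ρ s x) := by rw [hBinv]
  have hEx : ∀ x : V, x ≠ 0 → E1 H ρ x ≠ 0 := by
    intro x hx h0
    apply hx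
    have hc := congrArg (fun f : IndCarrier H ρ => (f : G → V) 1) h0
    simpa [E1_apply_one] using hc
  have hdisj : C11 ≠ 0 ∨ C12 ≠ 0 := by
    by_contra hcon
    push_neg at hcon
    obtain ⟨h11, h12⟩ := hcon
    obtain ⟨x, hx⟩ := exists_ne (0 : V)
    apply hEx x hx
    apply hBnd.1
    intro f
    have z11 : ∀ a b : V, B (E1 H ρ a) (E1 H ρ b) = 0 := by
      intro a b
      rw [← hC11a, h11]
      rfl
    have z12 : ∀ a b : V, B (E1 H ρ a) (E2 H ρ s b) = 0 := by
      intro a b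
      rw [← hC12a, h12]
      rfl
    rw [E_decomp hH hs f, map_add, z11, z12, add_zero]
  by_cases h11 : C11 = 0
  · have h12 : C12 ≠ 0 := hdisj.resolve_left (not_not.mpr h11)
    obtain ⟨h12L, h12R⟩ := schur_pair ρ σ hirrU hσirr C12 hC12inv h12
    refine Or.inr ⟨⟨C12, ?_, ?_, ?_⟩, ?_⟩
    · refine ⟨fun m hm => ?_, fun m hm => ?_⟩
      · apply h12L
        rw [map_zero]
        ext n
        simpa using hm n
      · apply h12R
        rw [map_zero]
        ext n
        simpa using hm n
    · intro h hm x y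
      have := hC12inv h x y
      rw [hσapp] at this
      exact this
    · exact fun hm x y => hC12tw hm x y
    · rintro ⟨Cs, hCsnd, hCsinv, hCssym⟩
      have hCsne : Cs ≠ 0 := by
        obtain ⟨x, hx⟩ := exists_ne (0 : V)
        intro h0
        refine hx (hCsnd.1 x fun n => ?_)
        rw [h0]
        rfl
      obtain ⟨hCsL, _⟩ := schur_pair ρ ρ hirrU hirrU Cs hCsinv hCsne
      have hDinv : ∀ (k : H) (x y : V), C12.flip (σ k x) (ρ k y) = C12.flip x y :=
        fun k x y => hC12inv k y x
      obtain ⟨e, he⟩ := pairings_equiv ρ σ Cs C12.flip hCsL h12R hCsinv hDinv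
      exact hns ⟨e, fun h hm x => he h x⟩
  · obtain ⟨h11L, h11R⟩ := schur_pair ρ ρ hirrU hirrU C11 hC11inv h11
    refine Or.inl ⟨⟨C11, ?_, hC11inv, hC11sym⟩, ?_⟩
    · refine ⟨fun m hm => ?_, fun m hm => ?_⟩
      · apply h11L
        rw [map_zero]
        ext n
        simpa using hm n
      · apply h11R
        rw [map_zero]
        ext n
        simpa using hm n
    · rintro ⟨Cd, hCdnd, hCdinv, hCdtw⟩
      have hCdinv' : ∀ (k : H) (x y : V), Cd (ρ k x) (σ k y) = Cd x y := by
        intro k x y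
        rw [hσapp]
        exact hCdinv k (hconj k) x y
      have hCdne : Cd ≠ 0 := by
        obtain ⟨x, hx⟩ := exists_ne (0 : V)
        intro h0
        refine hx (hCdnd.1 x fun n => ?_)
        rw [h0]
        rfl
      obtain ⟨_, hCdR⟩ := schur_pair ρ σ hirrU hσirr Cd hCdinv' hCdne
      have hDinv : ∀ (k : H) (x y : V), Cd.flip (σ k x) (ρ k y) = Cd.flip x y :=
        fun k x y => hCdinv' k y x
      obtain ⟨e, he⟩ := pairings_equiv ρ σ C11 Cd.flip h11L hCdR hC11inv hDinv
      exact hns ⟨e, fun h hm x => he h x⟩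
end

section
/- Let G be a group, H a subgroup of G of index 2, s an element of G not in H, and ε ∈ {1, −1}. If (π, W) is a semisimple finite-dimensional complex representation of G that is ε-self-dual, then the restriction Res_H π of π to H is both ε-self-dual and (ε, s)-conjugate-dual. -/
open LinearMap

/-- If `π` is a semisimple finite-dimensional complex representation of `G`
which is `ε`-self-dual (`ε ∈ {1, -1}`), and `H` is an index-two subgroup of `G` with
`s ∈ G - H`, then the restriction of `π` to `H` is both `ε`-self-dual and
`(ε, s)`-conjugate-dual. -/
theorem res_isSelfDual_and_isConjDual_of_isSelfDual {G W : Type} [Group G] [AddCommGroup W]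
    [Module ℂ W] [FiniteDimensional ℂ W] (H : Subgroup G) (hH : H.index = 2)
    (s : G) (hs : s ∉ H) (ε : ℂ) (hε : ε = 1 ∨ ε = -1) (π : Representation ℂ G W)
    (hss : IsSemisimpleRep π) (hsd : IsSelfDual π ε) :
    IsSelfDual (π.comp H.subtype : Representation ℂ H W) ε ∧
      IsConjDual H (π.comp H.subtype) s ε := by
  obtain ⟨B, hBnd, hinv, hsym⟩ := hsd
  have key : ∀ (a : G) (x y : W), π a (π a⁻¹ x) = x := by
    intro a x y
    rw [← Module.End.mul_apply, ← map_mul, mul_inv_cancel, map_one, Module.End.one_apply]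
  constructor
  · exact ⟨B, hBnd, fun k x y => hinv ↑k x y, hsym⟩
  · refine ⟨B.compl₁₂ (π s) LinearMap.id, ?_, ?_, ?_⟩
    · refine LinearMap.BilinForm.Nondegenerate.ofSeparatingLeft ?_
      intro x hx
      have h1 : π s x = 0 := hBnd.1 _ (fun y => by simpa using hx y)
      have h2 := congrArg (π s⁻¹) h1
      rw [← Module.End.mul_apply, ← map_mul, inv_mul_cancel, map_one,
        Module.End.one_apply, map_zero] at h2
      exact h2
    · intro h hm x y
      simp only [LinearMap.compl₁₂_apply, LinearMap.id_apply]
      have e1 : π s ((π.comp H.subtype) h x) = π (s * ↑h * s⁻¹) (π s x) := by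
        rw [show ((π.comp H.subtype) h x) = π ↑h x from rfl,
          ← Module.End.mul_apply, ← map_mul, ← Module.End.mul_apply, ← map_mul]
        congr 1
        group
      have e2 : (π.comp H.subtype) (⟨s * ↑h * s⁻¹, hm⟩ : H) y = π (s * ↑h * s⁻¹) y := rfl
      rw [e1, e2, hinv]
    · intro hm x y
      simp only [LinearMap.compl₁₂_apply, LinearMap.id_apply]
      have e2 : (π.comp H.subtype) (⟨s * s, hm⟩ : H) y = π s (π s y) := by
        rw [show (π.comp H.subtype) (⟨s * s, hm⟩ : H) y = π (s * s) y from rfl,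
          map_mul, Module.End.mul_apply]
      rw [e2, hinv s x (π s y)]
      exact hsym (π s y) x
end

section
/- Let G be a group, H a subgroup of G of index 2, s an element of G not in H, and ε ∈ {1, −1}. If (π, W) is an irreducible finite-dimensional complex representation of G such that the restriction Res_H π is both ε-self-dual and (ε, s)-conjugate-dual, then π is ε-self-dual. -/
open LinearMap

section AuxLemmas

variable {G W : Type} [Group G] [AddCommGroup W] [Module ℂ W]

/-- A nonzero invariant bilinear form on an irreducible representation is nondegenerate. -/
lemma aux_sepLeft_of_invariant (π : Representation ℂ G W) (hirr : IsIrreducibleRep π)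
    (Φ : LinearMap.BilinForm ℂ W) (hΦ : Φ ≠ 0)
    (hinv : ∀ (g : G) (x y : W), Φ (π g x) (π g y) = Φ x y) :
    Φ.SeparatingLeft := by
  have hcan : ∀ (g : G) (x : W), π g (π g⁻¹ x) = x := by
    intro g x
    rw [← Module.End.mul_apply, ← map_mul, mul_inv_cancel, map_one, Module.End.one_apply]
  have hker : ∀ (g : G) (x : W), x ∈ LinearMap.ker Φ → π g x ∈ LinearMap.ker Φ := by
    intro g x hx
    rw [LinearMap.mem_ker] at hx ⊢
    ext y
    have h1 : Φ (π g x) (π g (π g⁻¹ y)) = Φ x (π g⁻¹ y) := hinv g x _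
    rw [hcan] at h1
    simp [h1, hx]
  rcases hirr.2 _ hker with h | h
  · intro m hm
    have : Φ m = 0 := by ext n; exact hm n
    have : m ∈ LinearMap.ker Φ := LinearMap.mem_ker.2 this
    rw [h, Submodule.mem_bot] at this
    exact this
  · exfalso
    apply hΦ
    ext x y
    have : x ∈ LinearMap.ker Φ := by rw [h]; trivial
    rw [LinearMap.mem_ker] at this
    simp [this]

lemma aux_nondeg_of_invariant (π : Representation ℂ G W) (hirr : IsIrreducibleRep π)
    (Φ : LinearMap.BilinForm ℂ W) (hΦ : Φ ≠ 0)
    (hinv : ∀ (g : G) (x y : W), Φ (π g x) (π g y) = Φ x y) :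
    Φ.Nondegenerate := by
  refine ⟨aux_sepLeft_of_invariant π hirr Φ hΦ hinv,
    aux_sepLeft_of_invariant π hirr Φ.flip ?_ (fun g x y => hinv g y x)⟩
  intro h0
  apply hΦ
  ext x y
  exact DFunLike.congr_fun (DFunLike.congr_fun h0 y) x

/-- Schur's lemma: an endomorphism commuting with an irreducible representation is scalar. -/
lemma aux_schur [FiniteDimensional ℂ W] (π : Representation ℂ G W)
    (hirr : IsIrreducibleRep π) (D : W →ₗ[ℂ] W)
    (hD : ∀ (g : G) (x : W), D (π g x) = π g (D x)) :
    ∃ c : ℂ, ∀ x : W, D x = c • x := by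
  haveI : Nontrivial W := hirr.1
  obtain ⟨c, hc⟩ := Module.End.exists_eigenvalue (D : Module.End ℂ W)
  have hne : (Module.End.eigenspace (D : Module.End ℂ W) c) ≠ ⊥ := hc
  have hmem : ∀ x : W, x ∈ Module.End.eigenspace (D : Module.End ℂ W) c ↔ D x - c • x = 0 := by
    intro x
    rw [Module.End.eigenspace_def, LinearMap.mem_ker]
    constructor <;> intro h <;> simpa [LinearMap.sub_apply, LinearMap.smul_apply] using h
  have hinv : ∀ (g : G) (x : W),
      x ∈ Module.End.eigenspace (D : Module.End ℂ W) c →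
      π g x ∈ Module.End.eigenspace (D : Module.End ℂ W) c := by
    intro g x hx
    rw [hmem] at hx ⊢
    rw [hD]
    calc π g (D x) - c • π g x = π g (D x - c • x) := by rw [map_sub, map_smul]
    _ = 0 := by rw [hx, map_zero]
  rcases hirr.2 _ hinv with h | h
  · exact absurd h hne
  · refine ⟨c, fun x => ?_⟩
    have : x ∈ Module.End.eigenspace (D : Module.End ℂ W) c := by rw [h]; trivial
    rw [hmem] at this
    exact sub_eq_zero.1 this

end AuxLemmas

set_option maxHeartbeats 1000000 in
/-- If `π` is an irreducible finite-dimensional complex representation of `G`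
whose restriction to an index-two subgroup `H` is both `ε`-self-dual and
`(ε, s)`-conjugate-dual (`ε ∈ {1, -1}`, `s ∈ G - H`), then `π` is `ε`-self-dual. -/
theorem isSelfDual_of_res_isSelfDual_and_isConjDual {G W : Type} [Group G] [AddCommGroup W]
    [Module ℂ W] [FiniteDimensional ℂ W] (H : Subgroup G) (hH : H.index = 2)
    (s : G) (hs : s ∉ H) (ε : ℂ) (hε : ε = 1 ∨ ε = -1) (π : Representation ℂ G W)
    (hirr : IsIrreducibleRep π)
    (hres1 : IsSelfDual (π.comp H.subtype : Representation ℂ H W) ε)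
    (hres2 : IsConjDual H (π.comp H.subtype) s ε) :
    IsSelfDual π ε := by
  classical
  obtain ⟨B₁, h1nd, h1inv, h1sym⟩ := hres1
  obtain ⟨B₂, h2nd, h2inv, h2sym⟩ := hres2
  have h1inv : ∀ (k : H) (x y : W), B₁ (π ↑k x) (π ↑k y) = B₁ x y := h1inv
  have h2inv : ∀ (h : H) (hm : s * ↑h * s⁻¹ ∈ H) (x y : W),
      B₂ (π ↑h x) (π (s * ↑h * s⁻¹) y) = B₂ x y := h2inv
  have h2sym : ∀ (hm : s * s ∈ H) (x y : W), B₂ x (π (s * s) y) = ε * B₂ y x := h2sym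
  have hε2 : ε * ε = 1 := by rcases hε with h | h <;> simp [h]
  have hεne : ε ≠ 0 := by rcases hε with h | h <;> simp [h]
  have hss : s * s ∈ H := Subgroup.mul_self_mem_of_index_two hH s
  have hconj : ∀ h : H, s * ↑h * s⁻¹ ∈ H := by
    intro h
    rw [Subgroup.mul_mem_iff_of_index_two hH, Subgroup.mul_mem_iff_of_index_two hH,
      H.inv_mem_iff]
    simp [hs, h.2]
  have key : ∀ (a b : G) (x : W), π (a * b) x = π a (π b x) := by
    intro a b x; rw [map_mul, Module.End.mul_apply]
  have hcan : ∀ (g : G) (x : W), π g (π g⁻¹ x) = x := by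
    intro g x
    rw [← Module.End.mul_apply, ← map_mul, mul_inv_cancel, map_one, Module.End.one_apply]
  have hdec : ∀ g : G, g ∈ H ∨ ∃ h ∈ H, g = h * s := by
    intro g
    by_cases hg : g ∈ H
    · exact Or.inl hg
    · refine Or.inr ⟨g * s⁻¹, ?_, by group⟩
      rw [Subgroup.mul_mem_iff_of_index_two hH, H.inv_mem_iff]
      simp [hg, hs]
  -- conjugation identity: π s ∘ π h = π (s h s⁻¹) ∘ π s for h ∈ H
  have hTh : ∀ (h : H) (x : W), π s (π ↑h x) = π (s * ↑h * s⁻¹) (π s x) := by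
    intro h x
    rw [← key, ← key]
    congr 1
    group
  by_cases hι : ∀ x y : W, B₁ (π s x) (π s y) = -B₁ x y
  · -- B₁ is anti-invariant under s; use the conjugate-duality form
    set C : LinearMap.BilinForm ℂ W := B₂.compl₂ (π s) with hC
    have hCapp : ∀ x y : W, C x y = B₂ x (π s y) := fun x y => rfl
    have hCH : ∀ (h : H) (x y : W), C (π ↑h x) (π ↑h y) = C x y := by
      intro h x y
      rw [hCapp, hCapp, hTh h, h2inv h (hconj h)]
    have hCs : ∀ x y : W, C (π s x) (π s y) = ε * C y x := by
      intro x y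
      rw [hCapp, hCapp, ← key, h2sym hss]
    by_cases hE : ∀ x y : W, C y x = -(ε * C x y)
    · -- contradiction via Schur's lemma
      exfalso
      haveI : Nontrivial W := hirr.1
      have hnd1' : B₁.flip.Nondegenerate := by
        refine ⟨?_, h1nd.1⟩
        intro y hy
        apply h1nd.1 y
        intro x
        have hxy : B₁ x y = 0 := hy x
        rw [h1sym, hxy, mul_zero]
      set D : W →ₗ[ℂ] W :=
        ((B₁.flip.toDual hnd1').symm.toLinearMap ∘ₗ C.flip) with hDdef
      have hD : ∀ x y : W, B₁ x (D y) = C x y := by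
        intro x y
        have h0 : B₁.flip ((B₁.flip.toDual hnd1').symm (C.flip y)) x = C.flip y x :=
          LinearMap.BilinForm.apply_toDual_symm_apply (hB := hnd1') (C.flip y) x
        exact h0
      have hcancel : ∀ u v : W, (∀ x : W, B₁ x u = B₁ x v) → u = v := by
        intro u v huv
        have : u - v = 0 := by
          apply hnd1'.1
          intro x
          show B₁ x (u - v) = 0
          rw [map_sub, huv x, sub_self]
        exact sub_eq_zero.1 this
      have hDH : ∀ (h : H) (y : W), D (π ↑h y) = π ↑h (D y) := by
        intro h y
        apply hcancel
        intro x
        have hx : π ↑h (π (↑h)⁻¹ x) = x := hcan ↑h x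
        have hxin : ((↑h : G))⁻¹ ∈ H := H.inv_mem h.2
        calc B₁ x (D (π ↑h y)) = C x (π ↑h y) := hD x _
          _ = C (π ↑h (π (↑h)⁻¹ x)) (π ↑h y) := by rw [hx]
          _ = C (π (↑h)⁻¹ x) y := hCH h _ _
          _ = B₁ (π (↑h)⁻¹ x) (D y) := (hD _ _).symm
          _ = B₁ (π ↑h (π (↑h)⁻¹ x)) (π ↑h (D y)) := (h1inv h _ _).symm
          _ = B₁ x (π ↑h (D y)) := by rw [hx]
      have hDs : ∀ y : W, D (π s y) = π s (D y) := by
        intro y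
        apply hcancel
        intro x
        have hx : π s (π s⁻¹ x) = x := hcan s x
        have hEs : ∀ u v : W, ε * C u v = -C v u := by
          intro u v
          rw [hE u v]
          ring
        calc B₁ x (D (π s y))
            = C x (π s y) := hD x _
          _ = C (π s (π s⁻¹ x)) (π s y) := by rw [hx]
          _ = ε * C y (π s⁻¹ x) := hCs _ _
          _ = -C (π s⁻¹ x) y := hEs _ _
          _ = -B₁ (π s⁻¹ x) (D y) := by rw [hD]
          _ = B₁ (π s (π s⁻¹ x)) (π s (D y)) := by rw [hι]
          _ = B₁ x (π s (D y)) := by rw [hx]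
      have hDg : ∀ (g : G) (y : W), D (π g y) = π g (D y) := by
        intro g y
        rcases hdec g with hg | ⟨h, hh, rfl⟩
        · exact hDH ⟨g, hg⟩ y
        · rw [key, key, hDH ⟨h, hh⟩, hDs]
      obtain ⟨c, hc⟩ := aux_schur π hirr D hDg
      have hCB : ∀ x y : W, C x y = c * B₁ x y := by
        intro x y
        rw [← hD, hc, map_smul, smul_eq_mul]
      have hC0 : ∀ x y : W, C x y = 0 := by
        intro x y
        have e1 : C y x = ε * C x y := by
          rw [hCB, hCB, h1sym]
          ring
        have e2 : C y x = -(ε * C x y) := hE x y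
        have e3 : ε * C x y = 0 := by
          have := e1.symm.trans e2
          linear_combination this / 2
        rcases mul_eq_zero.1 e3 with h | h
        · exact absurd h hεne
        · exact h
      obtain ⟨x, hx0⟩ := exists_ne (0 : W)
      apply hx0
      apply h2nd.1
      intro z
      have := hC0 x (π s⁻¹ z)
      rwa [hCapp, hcan] at this
    · -- the symmetrization of C works
      set E : LinearMap.BilinForm ℂ W := C + ε • C.flip with hEdef
      have hEapp : ∀ x y : W, E x y = C x y + ε * C y x := by
        intro x y
        simp [hEdef, LinearMap.flip_apply]
      have hEH : ∀ (h : H) (x y : W), E (π ↑h x) (π ↑h y) = E x y := by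
        intro h x y
        rw [hEapp, hEapp, hCH, hCH]
      have hEs : ∀ x y : W, E (π s x) (π s y) = E x y := by
        intro x y
        rw [hEapp, hEapp, hCs, hCs]
        linear_combination (C x y) * hε2
      have hEinv : ∀ (g : G) (x y : W), E (π g x) (π g y) = E x y := by
        intro g x y
        rcases hdec g with hg | ⟨h, hh, rfl⟩
        · exact hEH ⟨g, hg⟩ x y
        · rw [key, key, hEH ⟨h, hh⟩, hEs]
      have hEne : E ≠ 0 := by
        push_neg at hE
        obtain ⟨x, y, hxy⟩ := hE
        intro h0
        apply hxy
        have : E x y = 0 := by rw [h0]; rfl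
        rw [hEapp] at this
        linear_combination ε * this - (C y x) * hε2
      have hEsym : ∀ x y : W, E y x = ε * E x y := by
        intro x y
        rw [hEapp, hEapp]
        linear_combination -(C y x) * hε2
      exact ⟨E, aux_nondeg_of_invariant π hirr E hEne hEinv, hEinv, hEsym⟩
  · -- the symmetrization of B₁ works
    set Φ : LinearMap.BilinForm ℂ W := B₁ + B₁.compl₁₂ (π s) (π s) with hΦdef
    have hΦapp : ∀ x y : W, Φ x y = B₁ x y + B₁ (π s x) (π s y) := by
      intro x y
      simp [hΦdef]
    have hΦH : ∀ (h : H) (x y : W), Φ (π ↑h x) (π ↑h y) = Φ x y := by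
      intro h x y
      rw [hΦapp, hΦapp, h1inv h, hTh h, hTh h, h1inv ⟨_, hconj h⟩]
    have hΦs : ∀ x y : W, Φ (π s x) (π s y) = Φ x y := by
      intro x y
      rw [hΦapp, hΦapp, ← key, ← key, h1inv ⟨s * s, hss⟩]
      ring
    have hΦinv : ∀ (g : G) (x y : W), Φ (π g x) (π g y) = Φ x y := by
      intro g x y
      rcases hdec g with hg | ⟨h, hh, rfl⟩
      · exact hΦH ⟨g, hg⟩ x y
      · rw [key, key, hΦH ⟨h, hh⟩, hΦs]
    have hΦne : Φ ≠ 0 := by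
      push_neg at hι
      obtain ⟨x, y, hxy⟩ := hι
      intro h0
      apply hxy
      have : Φ x y = 0 := by rw [h0]; rfl
      rw [hΦapp] at this
      linear_combination this
    have hΦsym : ∀ x y : W, Φ y x = ε * Φ x y := by
      intro x y
      rw [hΦapp, hΦapp, h1sym, h1sym (π s x), mul_add]
    exact ⟨Φ, aux_nondeg_of_invariant π hirr Φ hΦne hΦinv, hΦinv, hΦsym⟩
end

section
/- Let G be a finite group, H a subgroup of G of index 2, and s an element of G not in H. For an irreducible finite-dimensional complex representation (ρ, V) of H, the following are equivalent: (i) the induced representation Ind_H^G ρ is irreducible; (ii) ρ^s is not isomorphic to ρ; (iii) ρ does not extend to a representation of G (i.e., there is no representation of G on V whose restriction to H equals ρ). -/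
set_option maxHeartbeats 1000000
set_option synthInstance.maxHeartbeats 400000


open LinearMap

section Aux

variable {G V : Type} [Group G] [AddCommGroup V] [Module ℂ V]
variable {H : Subgroup G} {s : G}

lemma mem_of_not_not (hH : H.index = 2) (hs : s ∉ H) {g : G} (hg : g ∉ H) :
    g * s⁻¹ ∈ H := by
  rw [Subgroup.mul_mem_iff_of_index_two hH]
  simp only [inv_mem_iff]
  exact iff_of_false hg hs

lemma not_mem_mul (hH : H.index = 2) {a b : G} (ha : a ∈ H) (hb : b ∉ H) :
    a * b ∉ H := by
  rw [Subgroup.mul_mem_iff_of_index_two hH]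
  tauto

lemma conj_mem (hH : H.index = 2) (hs : s ∉ H) {h : G} (hh : h ∈ H) :
    s * h * s⁻¹ ∈ H :=
  mem_of_not_not hH hs (by
    rw [Subgroup.mul_mem_iff_of_index_two hH]; tauto)

lemma rho_congr (ρ : Representation ℂ H V) {a b : H} (hab : (a : G) = (b : G)) (x : V) :
    ρ a x = ρ b x := by
  cases Subtype.ext hab; rfl

lemma rho_mul (ρ : Representation ℂ H V) (a b : H) (x : V) :
    ρ a (ρ b x) = ρ (a * b) x := by
  rw [map_mul]; rfl

/-- Schur's lemma. -/
lemma schur_scalar [FiniteDimensional ℂ V] {ρ : Representation ℂ H V}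
    (hirr : IsIrreducibleRep ρ) (c : V →ₗ[ℂ] V)
    (hc : ∀ (h : H) (x : V), c (ρ h x) = ρ h (c x)) :
    ∃ μ : ℂ, ∀ x, c x = μ • x := by
  haveI := hirr.1
  obtain ⟨μ, hμ⟩ := Module.End.exists_eigenvalue (c : Module.End ℂ V)
  obtain ⟨v, hv⟩ := hμ.exists_hasEigenvector
  refine ⟨μ, fun x => ?_⟩
  set U : Submodule ℂ V :=
    { carrier := {x | c x = μ • x}
      add_mem' := fun {x y} hx hy => by
        simp only [Set.mem_setOf_eq] at *
        rw [map_add, hx, hy, smul_add]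
      zero_mem' := by simp
      smul_mem' := fun a x hx => by
        simp only [Set.mem_setOf_eq] at *
        rw [map_smul, hx, smul_comm] } with hUdef
  have hUinv : ∀ (k : H) (x : V), x ∈ U → ρ k x ∈ U := by
    intro k x hx
    show c (ρ k x) = μ • ρ k x
    rw [hc, hx, map_smul]
  have hUne : U ≠ ⊥ := by
    intro hbot
    have : v ∈ U := Module.End.mem_eigenspace_iff.mp hv.1
    rw [hbot, Submodule.mem_bot] at this
    exact hv.2 this
  rcases hirr.2 U hUinv with h | h
  · exact absurd h hUne
  · have : x ∈ U := h ▸ Submodule.mem_top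
    exact this

end Aux

section Aux2

variable {G V : Type} [Group G] [AddCommGroup V] [Module ℂ V]
variable {H : Subgroup G} {s : G}

lemma conj_to_ext [FiniteDimensional ℂ V] {ρ : Representation ℂ H V}
    (hH : H.index = 2) (hs : s ∉ H) (hirr : IsIrreducibleRep ρ)
    (hconj : ConjIsoSelf H ρ s) :
    ∃ π : Representation ℂ G V, π.comp H.subtype = ρ := by
  haveI := hirr.1
  obtain ⟨e, he⟩ := hconj
  have hss : s * s ∈ H := Subgroup.mul_self_mem_of_index_two hH s
  set t : H := ⟨s * s, hss⟩ with ht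
  -- f₀ = e.symm intertwines: f₀ (ρ h x) = ρ ⟨s h s⁻¹⟩ (f₀ x)
  have hf0 : ∀ (h : H) (hm : s * (h : G) * s⁻¹ ∈ H) (x : V),
      e.symm (ρ h x) = ρ ⟨s * h * s⁻¹, hm⟩ (e.symm x) := by
    intro h hm x
    apply e.injective
    rw [LinearEquiv.apply_symm_apply, he h hm, LinearEquiv.apply_symm_apply]
  -- c := f₀ ∘ f₀ ∘ ρ t⁻¹ commutes with ρ
  set c : V →ₗ[ℂ] V :=
    (e.symm.toLinearMap ∘ₗ e.symm.toLinearMap) ∘ₗ (ρ t⁻¹ : V →ₗ[ℂ] V) with hcdef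
  have hcapp : ∀ x, c x = e.symm (e.symm (ρ t⁻¹ x)) := fun x => rfl
  have hcomm : ∀ (h : H) (x : V), c (ρ h x) = ρ h (c x) := by
    intro h x
    rw [hcapp, hcapp, rho_mul, show (t⁻¹ * h : H) = (t⁻¹ * h * t) * t⁻¹ by group,
      ← rho_mul,
      hf0 _ (conj_mem hH hs (t⁻¹ * h * t).2),
      hf0 _ (conj_mem hH hs (conj_mem hH hs (t⁻¹ * h * t).2))]
    exact rho_congr ρ (by push_cast [ht]; group) _
  obtain ⟨μ, hμ⟩ := schur_scalar hirr c hcomm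
  have hμ0 : μ ≠ 0 := by
    intro h0
    obtain ⟨v, w, hvw⟩ := hirr.1
    have hne : v - w ≠ 0 := sub_ne_zero.mpr hvw
    have : c (ρ t (v - w)) = 0 := by rw [hμ, h0, zero_smul]
    rw [hcapp, rho_mul, inv_mul_cancel, map_one, Module.End.one_apply,
      LinearEquiv.map_eq_zero_iff, LinearEquiv.map_eq_zero_iff] at this
    exact hne this
  obtain ⟨ν, hν⟩ := IsAlgClosed.exists_pow_nat_eq (k := ℂ) μ⁻¹ two_pos
  -- F := ν • e.symm
  set F : V →ₗ[ℂ] V := ν • e.symm.toLinearMap with hFdef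
  have hF1 : ∀ (h : H) (hm : s * (h : G) * s⁻¹ ∈ H) (x : V),
      F (ρ h x) = ρ ⟨s * h * s⁻¹, hm⟩ (F x) := by
    intro h hm x
    simp only [hFdef, LinearMap.smul_apply, LinearEquiv.coe_coe, hf0 h hm, map_smul]
  have hFF : ∀ x, F (F x) = ρ t x := by
    intro x
    have h1 : e.symm (e.symm x) = μ • ρ t x := by
      have := hμ (ρ t x)
      rw [hcapp, rho_mul, inv_mul_cancel, map_one, Module.End.one_apply] at this
      rw [this]
    simp only [hFdef, LinearMap.smul_apply, LinearEquiv.coe_coe, map_smul]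
    rw [h1, smul_smul, smul_smul, ← pow_two, hν, inv_mul_cancel₀ hμ0, one_smul]
  classical
  set πf : G → (V →ₗ[ℂ] V) := fun g => if hg : g ∈ H then ρ ⟨g, hg⟩
      else (ρ ⟨g * s⁻¹, mem_of_not_not hH hs hg⟩ : V →ₗ[ℂ] V) ∘ₗ F with hπf
  have hpos : ∀ (g : G) (hg : g ∈ H), πf g = ρ ⟨g, hg⟩ := fun g hg => dif_pos hg
  have hneg : ∀ (g : G) (hg : g ∉ H),
      πf g = (ρ ⟨g * s⁻¹, mem_of_not_not hH hs hg⟩ : V →ₗ[ℂ] V) ∘ₗ F :=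
    fun g hg => dif_neg hg
  refine ⟨{ toFun := πf
            map_one' := ?_
            map_mul' := ?_ }, ?_⟩
  · rw [hpos 1 (one_mem H)]
    exact map_one ρ
  · intro a b
    show πf (a * b) = πf a * πf b
    by_cases ha : a ∈ H <;> by_cases hb : b ∈ H
    · have hab : a * b ∈ H := mul_mem ha hb
      rw [hpos _ hab, hpos _ ha, hpos _ hb]
      ext x
      rw [Module.End.mul_apply, rho_mul]
      exact rho_congr ρ (by push_cast; group) _
    · have hab : a * b ∉ H := not_mem_mul hH ha hb
      rw [hneg _ hab, hpos _ ha, hneg _ hb]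
      ext x
      simp only [LinearMap.coe_comp, Function.comp_apply, Module.End.mul_apply]
      rw [rho_mul]
      exact rho_congr ρ (by push_cast; group) _
    · have hab : a * b ∉ H := by
        rw [Subgroup.mul_mem_iff_of_index_two hH]; tauto
      rw [hneg _ hab, hneg _ ha, hpos _ hb]
      ext x
      simp only [LinearMap.coe_comp, Function.comp_apply, Module.End.mul_apply]
      rw [hF1 _ (conj_mem hH hs hb), rho_mul]
      exact rho_congr ρ (by push_cast; group) _
    · have hab : a * b ∈ H := by
        rw [Subgroup.mul_mem_iff_of_index_two hH]; tauto
      rw [hpos _ hab, hneg _ ha, hneg _ hb]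
      ext x
      simp only [LinearMap.coe_comp, Function.comp_apply, Module.End.mul_apply]
      rw [hF1 _ (conj_mem hH hs (mem_of_not_not hH hs hb)), hFF, rho_mul, rho_mul]
      exact (rho_congr ρ (by push_cast [ht]; group) _).symm
  · ext h x
    show πf ((H.subtype) h) x = ρ h x
    rw [show (H.subtype) h = (h : G) from rfl, hpos _ h.2]

end Aux2

section Aux3

variable {G V : Type} [Group G] [AddCommGroup V] [Module ℂ V]
variable {H : Subgroup G} {s : G}

lemma ind_apply {ρ : Representation ℂ H V} (g : G) (f : IndCarrier H ρ) (x : G) :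
    ((IndRep H ρ g f : IndCarrier H ρ) : G → V) x = (f : G → V) (x * g) := rfl

lemma ind_eval_mem {ρ : Representation ℂ H V} (f : IndCarrier H ρ) {g : G} (hg : g ∈ H) :
    (f : G → V) g = ρ ⟨g, hg⟩ ((f : G → V) 1) := by
  have := f.2 ⟨g, hg⟩ 1
  simpa using this

lemma ind_eval_not_mem {ρ : Representation ℂ H V} (hH : H.index = 2) (hs : s ∉ H)
    (f : IndCarrier H ρ) {g : G} (hg : g ∉ H) :
    (f : G → V) g = ρ ⟨g * s⁻¹, mem_of_not_not hH hs hg⟩ ((f : G → V) s) := by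
  have := f.2 ⟨g * s⁻¹, mem_of_not_not hH hs hg⟩ s
  simpa using this

/-- An element of the induced space is determined by its values at `1` and `s`. -/
lemma ind_ext (hH : H.index = 2) (hs : s ∉ H) {ρ : Representation ℂ H V}
    {f f' : IndCarrier H ρ} (h1 : (f : G → V) 1 = (f' : G → V) 1)
    (h2 : (f : G → V) s = (f' : G → V) s) : f = f' := by
  ext g
  by_cases hg : g ∈ H
  · rw [ind_eval_mem f hg, ind_eval_mem f' hg, h1]
  · rw [ind_eval_not_mem hH hs f hg, ind_eval_not_mem hH hs f' hg, h2]

/-- Construct an element of the induced space from its values at `1` and `s`. -/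
noncomputable def indMk (hH : H.index = 2) (hs : s ∉ H) (ρ : Representation ℂ H V) (v w : V) :
    IndCarrier H ρ := by
  classical
  refine ⟨fun g => if hg : g ∈ H then ρ ⟨g, hg⟩ v
    else ρ ⟨g * s⁻¹, mem_of_not_not hH hs hg⟩ w, ?_⟩
  intro h g
  beta_reduce
  by_cases hg : g ∈ H
  · rw [dif_pos hg, dif_pos (mul_mem h.2 hg), rho_mul]
    exact rho_congr ρ rfl v
  · have : (h : G) * g ∉ H := not_mem_mul hH h.2 hg
    rw [dif_neg hg, dif_neg this, rho_mul]
    exact rho_congr ρ (by push_cast; group) w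

lemma indMk_one (hH : H.index = 2) (hs : s ∉ H) (ρ : Representation ℂ H V) (v w : V) :
    ((indMk hH hs ρ v w : IndCarrier H ρ) : G → V) 1 = v := by
  classical
  show (if hg : (1 : G) ∈ H then _ else _) = v
  rw [dif_pos (one_mem H),
    show ((⟨(1 : G), one_mem H⟩ : H)) = 1 from Subtype.ext (by simp), map_one]
  rfl

lemma indMk_s (hH : H.index = 2) (hs : s ∉ H) (ρ : Representation ℂ H V) (v w : V) :
    ((indMk hH hs ρ v w : IndCarrier H ρ) : G → V) s = w := by
  classical
  show (if hg : s ∈ H then _ else _) = w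
  rw [dif_neg hs,
    show ((⟨s * s⁻¹, _⟩ : H)) = 1 from Subtype.ext (by simp), map_one]
  rfl

end Aux3

section Aux4

variable {G V : Type} [Group G] [AddCommGroup V] [Module ℂ V]
variable {H : Subgroup G} {s : G}

lemma ext_to_not_irr {ρ : Representation ℂ H V} (hH : H.index = 2) (hs : s ∉ H)
    (hirr : IsIrreducibleRep ρ)
    (hext : ∃ π : Representation ℂ G V, π.comp H.subtype = ρ) :
    ¬ IsIrreducibleRep (IndRep H ρ) := by
  obtain ⟨π, hπ⟩ := hext
  rintro ⟨-, hsub⟩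
  have hπh : ∀ (h : H) (x : V), π ↑h x = ρ h x := by
    intro h x
    rw [← hπ]; rfl
  obtain ⟨v, w, hvw⟩ := hirr.1
  set v0 : V := v - w with hv0
  have hv0ne : v0 ≠ 0 := sub_ne_zero.mpr hvw
  set U : Submodule ℂ (IndCarrier H ρ) :=
    { carrier := {f | ∀ g : G, (f : G → V) g = π g ((f : G → V) 1)}
      add_mem' := fun {f f'} hf hf' g => by
        simp only [Submodule.coe_add, Pi.add_apply, hf g, hf' g, map_add]
      zero_mem' := fun g => by simp
      smul_mem' := fun c f hf g => by
        simp only [SetLike.mem_coe, Set.mem_setOf_eq] at hf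
        simp only [Submodule.coe_smul, Pi.smul_apply, hf g, map_smul] } with hUdef
  have hUinv : ∀ (k : G) (f : IndCarrier H ρ), f ∈ U → IndRep H ρ k f ∈ U := by
    intro k f hf g
    show (f : G → V) (g * k) = π g ((f : G → V) (1 * k))
    rw [one_mul, hf (g * k), hf k, map_mul]
    rfl
  have hfθ : ∀ x : V, (fun g : G => π g x) ∈ IndCarrier H ρ := by
    intro x h g
    show π (↑h * g) x = ρ h (π g x)
    rw [map_mul, ← hπh h]
    rfl
  rcases hsub U hUinv with hbot | htop
  · -- the G-translate family of v0 is a nonzero element of U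
    have hmem : (⟨fun g : G => π g v0, hfθ v0⟩ : IndCarrier H ρ) ∈ U := by
      intro g
      show π g v0 = π g (π 1 v0)
      rw [map_one]
      rfl
    rw [hbot, Submodule.mem_bot] at hmem
    apply hv0ne
    have := congrArg (fun f : IndCarrier H ρ => (f : G → V) 1) hmem
    simpa [map_one] using this
  · -- indMk 0 v0 would be in U, contradiction
    have hmem : indMk hH hs ρ 0 v0 ∈ U := htop ▸ Submodule.mem_top
    have h1 := hmem s
    rw [indMk_s, indMk_one, map_zero] at h1
    exact hv0ne (by simpa using h1)

lemma not_conj_to_irr {ρ : Representation ℂ H V} [FiniteDimensional ℂ V]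
    (hH : H.index = 2) (hs : s ∉ H) (hirr : IsIrreducibleRep ρ)
    (hc : ¬ ConjIsoSelf H ρ s) : IsIrreducibleRep (IndRep H ρ) := by
  have hss : s * s ∈ H := Subgroup.mul_self_mem_of_index_two hH s
  obtain ⟨v, w, hvw⟩ := hirr.1
  set v0 : V := v - w with hv0
  have hv0ne : v0 ≠ 0 := sub_ne_zero.mpr hvw
  constructor
  · refine ⟨indMk hH hs ρ v0 0, 0, fun hcon => hv0ne ?_⟩
    have := congrArg (fun f : IndCarrier H ρ => (f : G → V) 1) hcon
    simpa [indMk_one] using this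
  intro U hU
  rw [or_iff_not_imp_left]
  intro hUbot
  obtain ⟨f₀, hf₀U, hf₀ne⟩ := Submodule.ne_bot_iff U |>.mp hUbot
  by_cases hA : ∃ f ∈ U, (f : G → V) 1 = 0 ∧ f ≠ 0
  · -- Case A: U contains a nonzero element vanishing at 1; conclude U = ⊤.
    obtain ⟨f₁, hf₁U, hf₁1, hf₁ne⟩ := hA
    set W : Submodule ℂ V :=
      { carrier := {x | ∃ f ∈ U, (f : G → V) 1 = 0 ∧ (f : G → V) s = x}
        add_mem' := by
          rintro a b ⟨f, hfU, hf1, hfs⟩ ⟨f', hf'U, hf'1, hf's⟩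
          exact ⟨f + f', add_mem hfU hf'U, by simp [hf1, hf'1], by simp [hfs, hf's]⟩
        zero_mem' := ⟨0, zero_mem U, by simp, by simp⟩
        smul_mem' := by
          rintro c a ⟨f, hfU, hf1, hfs⟩
          exact ⟨c • f, Submodule.smul_mem U c hfU, by simp [hf1], by simp [hfs]⟩ } with hWdef
    have hWinv : ∀ (h : H) (x : V), x ∈ W → ρ h x ∈ W := by
      rintro h x ⟨f, hfU, hf1, hfs⟩
      have hk : s⁻¹ * ↑h * s ∈ H := by
        have h1 : s⁻¹ * (h : G) ∉ H := by
          rw [Subgroup.mul_mem_iff_of_index_two hH]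
          simp only [inv_mem_iff]
          exact fun hiff => hs (hiff.mpr h.2)
        rw [Subgroup.mul_mem_iff_of_index_two hH]
        exact iff_of_false h1 hs
      refine ⟨IndRep H ρ (s⁻¹ * ↑h * s) f, hU _ _ hfU, ?_, ?_⟩
      · show (f : G → V) (1 * (s⁻¹ * ↑h * s)) = 0
        rw [one_mul, ind_eval_mem f hk, hf1, map_zero]
      · show (f : G → V) (s * (s⁻¹ * ↑h * s)) = ρ h x
        rw [show s * (s⁻¹ * ↑h * s) = ↑h * s by group, f.2 h s, hfs]
    have hWtop : W = ⊤ := by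
      rcases hirr.2 W hWinv with hbot | htop
      · exfalso
        have hf₁s : (f₁ : G → V) s ≠ 0 := by
          intro hzero
          exact hf₁ne (ind_ext hH hs (by simpa using hf₁1) (by simpa using hzero))
        have : (f₁ : G → V) s ∈ W := ⟨f₁, hf₁U, hf₁1, rfl⟩
        rw [hbot, Submodule.mem_bot] at this
        exact hf₁s this
      · exact htop
    have hmk0 : ∀ x : V, indMk hH hs ρ 0 x ∈ U := by
      intro x
      have hx : x ∈ W := hWtop ▸ Submodule.mem_top
      obtain ⟨f, hfU, hf1, hfs⟩ := hx
      have : f = indMk hH hs ρ 0 x :=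
        ind_ext hH hs (by rw [hf1, indMk_one]) (by rw [hfs, indMk_s])
      exact this ▸ hfU
    have hmk1 : ∀ x : V, indMk hH hs ρ x 0 ∈ U := by
      intro x
      have h2 : IndRep H ρ s (indMk hH hs ρ 0 x) = indMk hH hs ρ x 0 := by
        refine ind_ext hH hs ?_ ?_
        · show ((indMk hH hs ρ 0 x : IndCarrier H ρ) : G → V) (1 * s) = _
          rw [one_mul, indMk_s, indMk_one]
        · show ((indMk hH hs ρ 0 x : IndCarrier H ρ) : G → V) (s * s) = _
          rw [ind_eval_mem _ hss, indMk_one, indMk_s, map_zero]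
      exact h2 ▸ hU s _ (hmk0 x)
    rw [Submodule.eq_top_iff']
    intro f
    have hsplit : f = indMk hH hs ρ ((f : G → V) 1) 0 + indMk hH hs ρ 0 ((f : G → V) s) := by
      refine ind_ext hH hs ?_ ?_
      · simp [indMk_one]
      · simp [indMk_s]
    rw [hsplit]
    exact add_mem (hmk1 _) (hmk0 _)
  · -- Case B: every element of U vanishing at 1 is 0; derive ConjIsoSelf, contradiction.
    exfalso
    push_neg at hA
    have hB : ∀ f : IndCarrier H ρ, f ∈ U → (f : G → V) 1 = 0 → f = 0 := by
      intro f hfU hf1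
      by_contra hne
      exact hne (hA f hfU hf1) |>.elim
    set EU : U →ₗ[ℂ] V :=
      { toFun := fun u => ((u : IndCarrier H ρ) : G → V) 1
        map_add' := fun u u' => by simp
        map_smul' := fun c u => by simp } with hEU
    have hEUinj : Function.Injective EU := by
      intro u u' huu
      have h0 : ((((u - u' : U) : IndCarrier H ρ)) : G → V) 1 = 0 := by
        have hz : ((((u - u' : U) : IndCarrier H ρ)) : G → V) 1
            = (((u : U) : IndCarrier H ρ) : G → V) 1
              - (((u' : U) : IndCarrier H ρ) : G → V) 1 := by
          simp
        rw [hz]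
        exact sub_eq_zero.mpr huu
      have h1 : ((u - u' : U) : IndCarrier H ρ) = 0 := hB _ (u - u').2 h0
      have h2 : u - u' = 0 := Subtype.ext h1
      exact sub_eq_zero.mp h2
    have hEUsurj : Function.Surjective EU := by
      rw [← LinearMap.range_eq_top]
      have hrinv : ∀ (h : H) (x : V), x ∈ LinearMap.range EU → ρ h x ∈ LinearMap.range EU := by
        rintro h x ⟨⟨f, hfU⟩, rfl⟩
        refine ⟨⟨IndRep H ρ ↑h f, hU _ _ hfU⟩, ?_⟩
        show (f : G → V) (1 * ↑h) = ρ h ((f : G → V) 1)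
        rw [one_mul, ind_eval_mem f h.2]
      rcases hirr.2 _ hrinv with hbot | htop
      · exfalso
        have hf₀1 : (f₀ : G → V) 1 ≠ 0 := fun h0 => hf₀ne (hB f₀ hf₀U h0)
        have : EU ⟨f₀, hf₀U⟩ ∈ LinearMap.range EU := ⟨_, rfl⟩
        rw [hbot, Submodule.mem_bot] at this
        exact hf₀1 this
      · exact htop
    set eqv : U ≃ₗ[ℂ] V := LinearEquiv.ofBijective EU ⟨hEUinj, hEUsurj⟩ with heqv
    have heqv_apply : ∀ u : U, eqv u = EU u := fun u => rfl
    set ES : U →ₗ[ℂ] V :=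
      { toFun := fun u => ((u : IndCarrier H ρ) : G → V) s
        map_add' := fun u u' => by simp
        map_smul' := fun c u => by simp } with hES
    set T : V →ₗ[ℂ] V := ES ∘ₗ (eqv.symm : V →ₗ[ℂ] U) with hT
    have hTapp : ∀ x : V, T x = ((eqv.symm x : IndCarrier H ρ) : G → V) s := fun x => rfl
    have hTint : ∀ (h : H) (hm : s * ↑h * s⁻¹ ∈ H) (x : V),
        T (ρ h x) = ρ ⟨s * ↑h * s⁻¹, hm⟩ (T x) := by
      intro h hm x
      set u : U := eqv.symm x with hu
      have hu1 : ((u : IndCarrier H ρ) : G → V) 1 = x := by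
        have := eqv.apply_symm_apply x
        rw [← hu] at this
        exact this
      have hstep : eqv.symm (ρ h x) = ⟨IndRep H ρ ↑h ↑u, hU _ _ u.2⟩ := by
        rw [LinearEquiv.symm_apply_eq, heqv_apply]
        show ρ h x = ((u : IndCarrier H ρ) : G → V) (1 * ↑h)
        rw [one_mul, ind_eval_mem u.1 h.2, hu1]
      rw [hTapp, hstep]
      have h3 := (↑u : IndCarrier H ρ).2 ⟨s * ↑h * s⁻¹, hm⟩ s
      have h4 : (↑(⟨s * ↑h * s⁻¹, hm⟩ : H) : G) * s = s * ↑h := by push_cast; group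
      rw [h4] at h3
      show ((u : IndCarrier H ρ) : G → V) (s * ↑h) = _
      rw [h3]
      rfl
    have hTker : ∀ x : V, T x = 0 → x = 0 := by
      intro x hx
      rw [hTapp] at hx
      set u : U := eqv.symm x with hu
      have hfs : ((u : IndCarrier H ρ) : G → V) s = 0 := hx
      have hind : IndRep H ρ s ↑u = 0 := by
        apply hB _ (hU s _ u.2)
        show ((u : IndCarrier H ρ) : G → V) (1 * s) = 0
        rw [one_mul, hfs]
      have hu0 : (u : IndCarrier H ρ) = 0 := by
        ext g
        have := congrArg (fun f : IndCarrier H ρ => (f : G → V) (g * s⁻¹)) hind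
        rw [ind_apply] at this
        simpa [mul_assoc] using this
      have : x = EU u := (heqv_apply u ▸ eqv.apply_symm_apply x).symm
      rw [this]
      show ((u : IndCarrier H ρ) : G → V) 1 = 0
      rw [hu0]
      rfl
    have hTinj : Function.Injective T := by
      intro x y hxy
      have hz : T (x - y) = 0 := by rw [map_sub, hxy, sub_self]
      exact sub_eq_zero.mp (hTker _ hz)
    have hTsurj : Function.Surjective T :=
      LinearMap.injective_iff_surjective.mp hTinj
    set eT : V ≃ₗ[ℂ] V := LinearEquiv.ofBijective T ⟨hTinj, hTsurj⟩ with heT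
    apply hc
    refine ⟨eT.symm, fun h hm x => ?_⟩
    apply eT.injective
    rw [LinearEquiv.apply_symm_apply]
    have : eT (ρ h (eT.symm x)) = T (ρ h (eT.symm x)) := rfl
    rw [this, hTint h hm]
    have h2 : T (eT.symm x) = eT (eT.symm x) := rfl
    rw [h2, LinearEquiv.apply_symm_apply]

end Aux4


/-- For a finite group `G`, an index-two subgroup `H`, `s ∈ G - H`, and an
irreducible finite-dimensional complex representation `ρ` of `H`, the following are
equivalent: (i) `Ind_H^G ρ` is irreducible; (ii) `ρ^s ≇ ρ`; (iii) `ρ` does not extend to a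
representation of `G` on the same space. -/
theorem ind_irreducible_iff {G V : Type} [Group G] [Finite G] [AddCommGroup V] [Module ℂ V]
    [FiniteDimensional ℂ V] (H : Subgroup G) (hH : H.index = 2) (s : G) (hs : s ∉ H)
    (ρ : Representation ℂ H V) (hirr : IsIrreducibleRep ρ) :
    (IsIrreducibleRep (IndRep H ρ) ↔ ¬ ConjIsoSelf H ρ s) ∧
      (IsIrreducibleRep (IndRep H ρ) ↔
        ¬ ∃ π : Representation ℂ G V, π.comp H.subtype = ρ) := by
  constructor
  · constructor
    · intro hind hconj
      exact ext_to_not_irr hH hs hirr (conj_to_ext hH hs hirr hconj) hind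
    · exact fun hnc => not_conj_to_irr hH hs hirr hnc
  · constructor
    · intro hind hext
      exact ext_to_not_irr hH hs hirr hext hind
    · intro hext
      exact not_conj_to_irr hH hs hirr fun hconj => hext (conj_to_ext hH hs hirr hconj)
end

section
/- Let G be a finite group, H a subgroup of G of index 2, s an element of G not in H, and η : G → {±1} the nontrivial character of G that is trivial on H. Let (ρ, V) be an irreducible finite-dimensional complex representation of H with ρ^s isomorphic to ρ. Then ρ extends to a representation ρ~ of G, the twist η ⊗ ρ~ is an extension of ρ not isomorphic to ρ~, every extension of ρ to G equals ρ~ or η ⊗ ρ~, and Ind_H^G ρ is isomorphic to ρ~ ⊕ (η ⊗ ρ~). -/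
open LinearMap

section Extra

/-- The twist `η ⊗ π` of a representation `π` by a character `η`. -/
def TwistRep {K W : Type} [Group K] [AddCommGroup W] [Module ℂ W]
    (η : K →* ℂˣ) (π : Representation ℂ K W) : Representation ℂ K W where
  toFun k := (η k : ℂ) • π k
  map_one' := by simp
  map_mul' k k' := by
    simp only [map_mul, Units.val_mul]
    rw [smul_mul_smul_comm]

/-- The direct sum `π₁ ⊕ π₂` of two representations. -/
def ProdRep {K V₁ V₂ : Type} [Group K] [AddCommGroup V₁] [Module ℂ V₁]
    [AddCommGroup V₂] [Module ℂ V₂]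
    (π₁ : Representation ℂ K V₁) (π₂ : Representation ℂ K V₂) :
    Representation ℂ K (V₁ × V₂) where
  toFun k := (π₁ k).prodMap (π₂ k)
  map_one' := by ext x <;> simp
  map_mul' k k' := by ext x <;> simp

end Extra

/-!
An isomorphism `B : ρ^s ≅ ρ` squares to an operator commuting with `ρ` up to `ρ(s²)`, so by
Schur's lemma `B² = c • ρ(s²)` with `c ≠ 0`. Rescaling `B` by a square root of `c⁻¹` gives `A` with
`A ρ(h) = ρ(s h s⁻¹) A` and `A² = ρ(s²)`, and letting `s` act by `A` extends `ρ` to `ρe`.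
For another extension `π`, Schur's lemma applied to `π(s) ρe(s⁻¹)` gives `π(s) = c • ρe(s)` with
`c² = 1` (as `s² ∈ H`), so `π = ρe` or `π = η ⊗ ρe`; an isomorphism `ρe ≅ η ⊗ ρe` would be a
nonzero scalar, which cannot commute with `ρe(s)` up to the sign `η(s) = -1`.
Finally `f ↦ (f 1 + ρe(s⁻¹) f(s), f 1 - ρe(s⁻¹) f(s))` identifies `Ind_H^G ρ` with
`ρe ⊕ η ⊗ ρe`, with inverse `(v, w) ↦ (g ↦ ½ ρe(g) (v + η(g) w))`.
-/

namespace Representation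

section ExtendWith

variable {k G V : Type*} [CommSemiring k] [Group G] [AddCommMonoid V] [Module k V]
  {H : Subgroup G} (ρ : Representation k H V)

open Classical in
/-- Extending by `0` off `H` makes `extendByZero` multiplicative on every pair with one factor in
`H`, so the computations below happen in `Module.End` without membership proofs. -/
noncomputable def extendByZero (g : G) : Module.End k V :=
  if hg : g ∈ H then ρ ⟨g, hg⟩ else 0

@[simp]
lemma extendByZero_coe (h : H) : ρ.extendByZero h = ρ h := by
  simp [extendByZero]

@[simp]
lemma extendByZero_one : ρ.extendByZero 1 = 1 := by
  rw [← H.coe_one, extendByZero_coe, map_one]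

lemma extendByZero_of_notMem {g : G} (hg : g ∉ H) : ρ.extendByZero g = 0 :=
  dif_neg hg

lemma extendByZero_mul_of_mem_left {a : G} (ha : a ∈ H) (b : G) :
    ρ.extendByZero (a * b) = ρ.extendByZero a * ρ.extendByZero b := by
  by_cases hb : b ∈ H
  · lift a to H using ha
    lift b to H using hb
    rw [← Subgroup.coe_mul, extendByZero_coe, extendByZero_coe, extendByZero_coe, map_mul]
  · rw [extendByZero_of_notMem ρ hb, mul_zero,
      extendByZero_of_notMem ρ (mt ((Subgroup.mul_mem_cancel_left H ha).mp) hb)]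

lemma extendByZero_mul_of_mem_right (a : G) {b : G} (hb : b ∈ H) :
    ρ.extendByZero (a * b) = ρ.extendByZero a * ρ.extendByZero b := by
  by_cases ha : a ∈ H
  · exact ρ.extendByZero_mul_of_mem_left ha b
  · rw [extendByZero_of_notMem ρ ha, zero_mul,
      extendByZero_of_notMem ρ (mt ((Subgroup.mul_mem_cancel_right H hb).mp) ha)]

variable (s : G) (A : Module.End k V)

/-- Exactly one summand is nonzero: `ρ g` on `H`, and `ρ (g * s⁻¹) * A` off `H`. -/
noncomputable def extendWithFun (g : G) : Module.End k V :=
  ρ.extendByZero g + ρ.extendByZero (g * s⁻¹) * A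

variable {s A}

lemma extendWithFun_mul_of_mem {a : G} (ha : a ∈ H) (g : G) :
    ρ.extendWithFun s A (a * g) = ρ.extendByZero a * ρ.extendWithFun s A g := by
  simp only [extendWithFun, mul_add, mul_assoc, ρ.extendByZero_mul_of_mem_left ha]

lemma extendWithFun_of_mem (hs : s ∉ H) {a : G} (ha : a ∈ H) :
    ρ.extendWithFun s A a = ρ.extendByZero a := by
  rw [extendWithFun, ρ.extendByZero_of_notMem (mt (H.mul_mem_cancel_left ha).mp (by simpa)),
    zero_mul, add_zero]

lemma extendWithFun_one (hs : s ∉ H) : ρ.extendWithFun s A 1 = 1 := by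
  rw [ρ.extendWithFun_of_mem hs H.one_mem, extendByZero_one]

lemma extendWithFun_self_mul (hH : H.index = 2)
    (hA : ∀ g, A * ρ.extendByZero g = ρ.extendByZero (s * g * s⁻¹) * A)
    (hA2 : A * A = ρ.extendByZero (s * s)) (g : G) :
    ρ.extendWithFun s A (s * g) = A * ρ.extendWithFun s A g := by
  have hss : s * s ∈ H := Subgroup.mul_self_mem_of_index_two hH s
  calc ρ.extendWithFun s A (s * g)
      = ρ.extendByZero (s * g * s⁻¹) * A + ρ.extendByZero (s * (g * s⁻¹) * s⁻¹) * A * A := by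
        rw [mul_assoc _ A A, hA2, ← ρ.extendByZero_mul_of_mem_right _ hss, extendWithFun, add_comm]
        group
    _ = A * ρ.extendWithFun s A g := by
        rw [extendWithFun, mul_add, hA, ← mul_assoc A, hA]

noncomputable def extendWith (hH : H.index = 2) (hs : s ∉ H)
    (hA : ∀ g, A * ρ.extendByZero g = ρ.extendByZero (s * g * s⁻¹) * A)
    (hA2 : A * A = ρ.extendByZero (s * s)) : Representation k G V where
  toFun := ρ.extendWithFun s A
  map_one' := ρ.extendWithFun_one hs
  map_mul' g₁ g₂ := by
    by_cases h₁ : g₁ ∈ H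
    · rw [ρ.extendWithFun_mul_of_mem h₁, ρ.extendWithFun_of_mem hs h₁]
    · have hfs : ρ.extendWithFun s A s = A := by
        simpa [ρ.extendWithFun_one hs] using ρ.extendWithFun_self_mul hH hA hA2 1
      obtain ⟨a, ha, rfl⟩ : ∃ a ∈ H, a * s = g₁ :=
        ⟨g₁ * s⁻¹, (Subgroup.mul_mem_iff_of_index_two hH).mpr (iff_of_false h₁ (by simpa)),
          inv_mul_cancel_right g₁ s⟩
      rw [mul_assoc, ρ.extendWithFun_mul_of_mem ha, ρ.extendWithFun_mul_of_mem ha,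
        ρ.extendWithFun_self_mul hH hA hA2, hfs, mul_assoc]

lemma extendWith_comp_subtype (hH : H.index = 2) (hs : s ∉ H)
    (hA : ∀ g, A * ρ.extendByZero g = ρ.extendByZero (s * g * s⁻¹) * A)
    (hA2 : A * A = ρ.extendByZero (s * s)) :
    (ρ.extendWith hH hs hA hA2).comp H.subtype = ρ :=
  MonoidHom.ext fun h => (ρ.extendWithFun_of_mem hs h.2).trans (ρ.extendByZero_coe h)

end ExtendWith

end Representation

lemma IsIrreducibleRep.exists_eq_smul_one {K V : Type} [Group K] [AddCommGroup V] [Module ℂ V]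
    [FiniteDimensional ℂ V] {ρ : Representation ℂ K V} (hρ : IsIrreducibleRep ρ)
    {T : Module.End ℂ V} (hT : ∀ k, T * ρ k = ρ k * T) : ∃ c : ℂ, T = c • 1 := by
  have : Nontrivial V := hρ.1
  obtain ⟨μ, hμ⟩ := Module.End.exists_eigenvalue T
  have hinv : ∀ k, ∀ x ∈ T.eigenspace μ, ρ k x ∈ T.eigenspace μ := by
    intro k x hx
    rw [Module.End.mem_eigenspace_iff] at hx ⊢
    rw [← Module.End.mul_apply, hT, Module.End.mul_apply, hx, map_smul]
  rcases hρ.2 _ hinv with hbot | htop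
  · exact absurd hbot (Module.End.hasEigenvalue_iff.mp hμ)
  · refine ⟨μ, LinearMap.ext fun x => ?_⟩
    simpa using Module.End.mem_eigenspace_iff.mp (htop ▸ Submodule.mem_top : x ∈ T.eigenspace μ)

section ConjIsoSelf

variable {G V : Type} [Group G] [AddCommGroup V] [Module ℂ V] {H : Subgroup G}
  {ρ : Representation ℂ H V} {s : G}

lemma ConjIsoSelf.exists_linearEquiv_mul_extendByZero (hH : H.index = 2)
    (hρ : ConjIsoSelf H ρ s) :
    ∃ B : V ≃ₗ[ℂ] V, ∀ g, B.toLinearMap * ρ.extendByZero g =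
      ρ.extendByZero (s * g * s⁻¹) * B.toLinearMap := by
  obtain ⟨e, he⟩ := hρ
  refine ⟨e.symm, fun g => ?_⟩
  by_cases hg : g ∈ H
  · have hm : s * g * s⁻¹ ∈ H := (Subgroup.normal_of_index_eq_two hH).conj_mem g hg s
    lift g to H using hg
    refine LinearMap.ext fun x => e.injective ?_
    simp [Representation.extendByZero_coe ρ ⟨_, hm⟩, he g hm]
  · have hm : s * g * s⁻¹ ∉ H := fun hm => hg <| by
      simpa [mul_assoc] using (Subgroup.normal_of_index_eq_two hH).conj_mem _ hm s⁻¹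
    rw [ρ.extendByZero_of_notMem hg, ρ.extendByZero_of_notMem hm, mul_zero, zero_mul]

lemma ConjIsoSelf.exists_mul_self_eq [FiniteDimensional ℂ V] (hH : H.index = 2)
    (hirr : IsIrreducibleRep ρ) (hρ : ConjIsoSelf H ρ s) :
    ∃ A : Module.End ℂ V, (∀ g, A * ρ.extendByZero g = ρ.extendByZero (s * g * s⁻¹) * A) ∧
      A * A = ρ.extendByZero (s * s) := by
  obtain ⟨B, hB⟩ := hρ.exists_linearEquiv_mul_extendByZero hH
  have hss : s * s ∈ H := Subgroup.mul_self_mem_of_index_two hH s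
  have hB₂ : ∀ g, B.toLinearMap * B * ρ.extendByZero g =
      ρ.extendByZero (s * (s * g * s⁻¹) * s⁻¹) * (B.toLinearMap * B) := by
    intro g
    rw [mul_assoc, hB, ← mul_assoc, hB, mul_assoc]
  have hT : ∀ h : H, ρ.extendByZero (s * s)⁻¹ * (B.toLinearMap * B) * ρ h =
      ρ h * (ρ.extendByZero (s * s)⁻¹ * (B.toLinearMap * B)) := by
    intro h
    rw [← ρ.extendByZero_coe h, mul_assoc, hB₂, ← mul_assoc,
      ← ρ.extendByZero_mul_of_mem_left (H.inv_mem hss), ← mul_assoc (ρ.extendByZero h),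
      ← ρ.extendByZero_mul_of_mem_left h.2]
    congr 2
    group
  obtain ⟨c, hc⟩ := hirr.exists_eq_smul_one hT
  have hBB : B.toLinearMap * B = c • ρ.extendByZero (s * s) := calc
    B.toLinearMap * B
        = ρ.extendByZero (s * s) * (ρ.extendByZero (s * s)⁻¹ * (B.toLinearMap * B)) := by
      rw [← mul_assoc, ← ρ.extendByZero_mul_of_mem_left hss, mul_inv_cancel, ρ.extendByZero_one,
        one_mul]
    _ = c • ρ.extendByZero (s * s) := by rw [hc, mul_smul_one]
  have hc0 : c ≠ 0 := by
    rintro rfl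
    have : Nontrivial V := hirr.1
    obtain ⟨x, hx⟩ := exists_ne (0 : V)
    rw [zero_smul] at hBB
    exact hx (B.injective (B.injective (by simpa using LinearMap.congr_fun hBB x)))
  obtain ⟨l, hl⟩ := IsAlgClosed.exists_pow_nat_eq c⁻¹ two_pos
  refine ⟨l • B.toLinearMap, fun g => by rw [smul_mul_assoc, hB, mul_smul_comm], ?_⟩
  rw [smul_mul_smul, hBB, smul_smul, ← sq, hl, inv_mul_cancel₀ hc0, one_smul]

end ConjIsoSelf

@[simp]
lemma twistRep_apply {K W : Type} [Group K] [AddCommGroup W] [Module ℂ W] (η : K →* ℂˣ)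
    (π : Representation ℂ K W) (k : K) : TwistRep η π k = (η k : ℂ) • π k :=
  rfl

section IndexTwo

variable {G V : Type} [Group G] [AddCommGroup V] [Module ℂ V] {H : Subgroup G} {η : G →* ℂˣ}

lemma val_apply_eq_neg_one_of_notMem (hH : H.index = 2) (hη1 : ∀ h ∈ H, η h = 1)
    (hη2 : η ≠ 1) {g : G} (hg : g ∉ H) : (η g : ℂ) = -1 := by
  have hsq : (η g : ℂ) * η g = 1 := by
    rw [← Units.val_mul, ← map_mul, hη1 _ (Subgroup.mul_self_mem_of_index_two hH g),
      Units.val_one]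
  refine (mul_self_eq_one_iff.mp hsq).resolve_left fun h => hη2 (MonoidHom.ext fun x => ?_)
  by_cases hx : x ∈ H
  · exact hη1 x hx
  · have hxg := hη1 _ ((Subgroup.mul_mem_iff_of_index_two hH).mpr (iff_of_false hx hg))
    rwa [map_mul, Units.val_eq_one.mp h, mul_one] at hxg

lemma twistRep_comp_subtype (hη1 : ∀ h ∈ H, η h = 1) (π : Representation ℂ G V) :
    (TwistRep η π).comp H.subtype = π.comp H.subtype :=
  MonoidHom.ext fun h => by simp [hη1 h h.2]

lemma not_repIso_twistRep [FiniteDimensional ℂ V] {π : Representation ℂ G V}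
    (hirr : IsIrreducibleRep (π.comp H.subtype)) (hη1 : ∀ h ∈ H, η h = 1) (hη2 : η ≠ 1) :
    ¬ RepIso π (TwistRep η π) := by
  rintro ⟨f, hf⟩
  have : Nontrivial V := hirr.1
  obtain ⟨c, hc⟩ := hirr.exists_eq_smul_one (T := f.toLinearMap) fun h =>
    LinearMap.ext fun x => by simpa [hη1 h h.2] using hf h x
  have hfc : ∀ x, f x = c • x := fun x => by simpa using LinearMap.congr_fun hc x
  obtain ⟨g, hg⟩ : ∃ g, η g ≠ 1 := by
    by_contra! h
    exact hη2 (MonoidHom.ext h)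
  obtain ⟨x, hx⟩ := exists_ne (0 : V)
  have hc0 : c ≠ 0 := by
    rintro rfl
    exact hx (f.injective (by simp [hfc]))
  have hgx : π g x ≠ 0 := fun h => hx <| by
    simpa [← Module.End.mul_apply, ← map_mul] using congrArg (π g⁻¹) h
  have hfg := hf g x
  simp only [twistRep_apply, LinearMap.smul_apply, hfc, map_smul, smul_smul] at hfg
  have : (c * (1 - η g)) • π g x = 0 := by
    rw [mul_sub, mul_one, sub_smul, ← hfg, sub_self]
  rcases smul_eq_zero.mp this with h | h
  · exact hg (Units.val_eq_one.mp (sub_eq_zero.mp ((mul_eq_zero.mp h).resolve_left hc0)).symm)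
  · exact hgx h

lemma eq_or_eq_twistRep_of_comp_subtype_eq [FiniteDimensional ℂ V] (hH : H.index = 2)
    (hη1 : ∀ h ∈ H, η h = 1) (hη2 : η ≠ 1) {π π' : Representation ℂ G V}
    (hirr : IsIrreducibleRep (π'.comp H.subtype)) (hππ' : π.comp H.subtype = π'.comp H.subtype) :
    π = π' ∨ π = TwistRep η π' := by
  obtain ⟨s, hs, -⟩ := Subgroup.index_eq_two_iff_exists_notMem_and.mp hH
  have hH' : ∀ h ∈ H, π h = π' h := fun h hh => DFunLike.congr_fun hππ' ⟨h, hh⟩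
  have hT : ∀ h : H, π s * π' s⁻¹ * π' h = π' h * (π s * π' s⁻¹) := by
    intro h
    have hm : s⁻¹ * h * s ∈ H := by
      simpa using (Subgroup.normal_of_index_eq_two hH).conj_mem _ h.2 s⁻¹
    rw [mul_assoc, ← map_mul, show s⁻¹ * (h : G) = s⁻¹ * h * s * s⁻¹ by group, map_mul,
      ← hH' _ hm, ← mul_assoc, ← map_mul, show s * (s⁻¹ * h * s) = h * s by group, map_mul,
      hH' h h.2, mul_assoc]
  obtain ⟨c, hc⟩ := hirr.exists_eq_smul_one hT
  have hπs : π s = c • π' s := by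
    rw [← mul_one (π s), ← map_one π', ← inv_mul_cancel s, map_mul, ← mul_assoc, hc,
      smul_one_mul]
  have hπ : ∀ g ∉ H, π g = c • π' g := by
    intro g hg
    have hm : g * s⁻¹ ∈ H := (Subgroup.mul_mem_iff_of_index_two hH).mpr (iff_of_false hg (by simpa))
    rw [← inv_mul_cancel_right g s, map_mul, hπs, hH' _ hm, mul_smul_comm, ← map_mul]
  have hc2 : c * c = 1 := by
    have : Nontrivial V := hirr.1
    have hss : s * s ∈ H := Subgroup.mul_self_mem_of_index_two hH s
    refine smul_left_injective ℂ (one_ne_zero (α := Module.End ℂ V)) ?_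
    calc (c * c) • (1 : Module.End ℂ V) = π (s * s) * π' (s * s)⁻¹ := by
          rw [map_mul π, hπs, smul_mul_smul, smul_mul_assoc, ← map_mul, ← map_mul,
            mul_inv_cancel, map_one]
      _ = (1 : ℂ) • 1 := by rw [hH' _ hss, ← map_mul, mul_inv_cancel, map_one, one_smul]
  rcases mul_self_eq_one_iff.mp hc2 with rfl | rfl
  · refine Or.inl (MonoidHom.ext fun g => ?_)
    by_cases hg : g ∈ H
    · exact hH' g hg
    · rw [hπ g hg, one_smul]
  · refine Or.inr (MonoidHom.ext fun g => ?_)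
    by_cases hg : g ∈ H
    · simp [hη1 g hg, hH' g hg]
    · simp [hπ g hg, val_apply_eq_neg_one_of_notMem hH hη1 hη2 hg]

end IndexTwo

section Induced

variable {G V : Type} [Group G] [AddCommGroup V] [Module ℂ V] {H : Subgroup G} (η : G →* ℂˣ)
  (π : Representation ℂ G V)

noncomputable def prodToInd (hη1 : ∀ h ∈ H, η h = 1) :
    V × V →ₗ[ℂ] IndCarrier H (π.comp H.subtype) :=
  LinearMap.codRestrict _
    (LinearMap.pi fun g =>
      (2⁻¹ : ℂ) • π g ∘ₗ (LinearMap.fst ℂ V V + (η g : ℂ) • LinearMap.snd ℂ V V))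
    fun p h g => by
      change (2⁻¹ : ℂ) • π (h * g) (p.1 + (η (h * g) : ℂ) • p.2) =
        π h ((2⁻¹ : ℂ) • π g (p.1 + (η g : ℂ) • p.2))
      rw [map_mul η, hη1 h h.2, one_mul, map_smul, map_mul π, Module.End.mul_apply]

lemma prodToInd_apply (hη1 : ∀ h ∈ H, η h = 1) (p : V × V) (g : G) :
    (prodToInd η π hη1 p : G → V) g = (2⁻¹ : ℂ) • π g (p.1 + (η g : ℂ) • p.2) :=
  rfl

def indToProd (s : G) : IndCarrier H (π.comp H.subtype) →ₗ[ℂ] V × V :=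
  let ev : G → (G → V) →ₗ[ℂ] V := LinearMap.proj
  (LinearMap.prod (ev 1 + π s⁻¹ ∘ₗ ev s) (ev 1 - π s⁻¹ ∘ₗ ev s)) ∘ₗ (IndCarrier H _).subtype

lemma indToProd_apply (s : G) (f : IndCarrier H (π.comp H.subtype)) :
    indToProd π s f = (f.1 1 + π s⁻¹ (f.1 s), f.1 1 - π s⁻¹ (f.1 s)) :=
  rfl

lemma prodToInd_prodRep (hη1 : ∀ h ∈ H, η h = 1) (g : G) (p : V × V) :
    prodToInd η π hη1 (ProdRep π (TwistRep η π) g p) =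
      IndRep H (π.comp H.subtype) g (prodToInd η π hη1 p) := by
  refine Subtype.ext (funext fun x => ?_)
  change (2⁻¹ : ℂ) • π x (π g p.1 + (η x : ℂ) • (η g : ℂ) • π g p.2) =
    (2⁻¹ : ℂ) • π (x * g) (p.1 + (η (x * g) : ℂ) • p.2)
  simp only [map_mul π, map_mul η, Units.val_mul, mul_smul, Module.End.mul_apply, map_add,
    map_smul]

variable {η π}

lemma indToProd_comp_prodToInd (hη1 : ∀ h ∈ H, η h = 1) {s : G} (hs : (η s : ℂ) = -1) :
    indToProd π s ∘ₗ prodToInd η π hη1 = LinearMap.id := by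
  refine LinearMap.ext fun p => ?_
  simp only [LinearMap.comp_apply, indToProd_apply, prodToInd_apply, LinearMap.id_apply, map_one,
    Units.val_one, hs, map_smul, ← Module.End.mul_apply, ← map_mul, inv_mul_cancel]
  ext <;> simp only [Module.End.one_apply] <;> module

lemma prodToInd_comp_indToProd (hH : H.index = 2) (hη1 : ∀ h ∈ H, η h = 1)
    (hη : ∀ g ∉ H, (η g : ℂ) = -1) {s : G} (hs : s ∉ H) :
    prodToInd η π hη1 ∘ₗ indToProd π s = LinearMap.id := by
  refine LinearMap.ext fun f => Subtype.ext (funext fun g => ?_)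
  rw [LinearMap.comp_apply, prodToInd_apply, indToProd_apply, LinearMap.id_apply]
  set v := π s⁻¹ (f.1 s)
  by_cases hg : g ∈ H
  · have hfg : f.1 g = π g (f.1 1) := by simpa using f.2 ⟨g, hg⟩ 1
    have hsum : f.1 1 + v + (η g : ℂ) • (f.1 1 - v) = (2 : ℂ) • f.1 1 := by
      rw [hη1 g hg, Units.val_one]
      module
    rw [hsum, hfg, map_smul, smul_smul, inv_mul_cancel₀ two_ne_zero, one_smul]
  · have hm : g * s⁻¹ ∈ H :=
      (Subgroup.mul_mem_iff_of_index_two hH).mpr (iff_of_false hg (by simpa))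
    have hfg : f.1 g = π g v := by
      simpa [v, ← Module.End.mul_apply, ← map_mul] using f.2 ⟨g * s⁻¹, hm⟩ s
    have hsum : f.1 1 + v + (η g : ℂ) • (f.1 1 - v) = (2 : ℂ) • v := by
      rw [hη g hg]
      module
    rw [hsum, hfg, map_smul, smul_smul, inv_mul_cancel₀ two_ne_zero, one_smul]

lemma repIso_indRep_comp_subtype (hH : H.index = 2) (hη1 : ∀ h ∈ H, η h = 1) (hη2 : η ≠ 1)
    (π : Representation ℂ G V) :
    RepIso (IndRep H (π.comp H.subtype)) (ProdRep π (TwistRep η π)) := by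
  obtain ⟨s, hs, -⟩ := Subgroup.index_eq_two_iff_exists_notMem_and.mp hH
  have hη := fun g => val_apply_eq_neg_one_of_notMem hH hη1 hη2 (g := g)
  have hΦΨ := indToProd_comp_prodToInd (π := π) hη1 (hη s hs)
  have hΨΦ := prodToInd_comp_indToProd (π := π) hH hη1 hη hs
  refine ⟨LinearEquiv.ofLinearMap _ _ hΦΨ hΨΦ, fun g f => ?_⟩
  calc indToProd π s (IndRep H _ g f)
      = indToProd π s (IndRep H _ g (prodToInd η π hη1 (indToProd π s f))) := by
        rw [← LinearMap.comp_apply (prodToInd η π hη1), hΨΦ, LinearMap.id_apply]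
    _ = ProdRep π (TwistRep η π) g (indToProd π s f) := by
        rw [← prodToInd_prodRep, ← LinearMap.comp_apply, hΦΨ, LinearMap.id_apply]

end Induced

theorem exists_extension_of_conjIsoSelf_general {G V : Type} [Group G] [AddCommGroup V]
    [Module ℂ V] [FiniteDimensional ℂ V] (H : Subgroup G) (hH : H.index = 2)
    (s : G) (hs : s ∉ H) (η : G →* ℂˣ) (hη1 : ∀ h ∈ H, η h = 1) (hη2 : η ≠ 1)
    (ρ : Representation ℂ H V) (hirr : IsIrreducibleRep ρ) (hcs : ConjIsoSelf H ρ s) :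
    ∃ ρe : Representation ℂ G V,
      ρe.comp H.subtype = ρ ∧
      (TwistRep η ρe).comp H.subtype = ρ ∧
      ¬ RepIso ρe (TwistRep η ρe) ∧
      (∀ π : Representation ℂ G V, π.comp H.subtype = ρ →
        π = ρe ∨ π = TwistRep η ρe) ∧
      RepIso (IndRep H ρ) (ProdRep ρe (TwistRep η ρe)) := by
  obtain ⟨A, hA, hA2⟩ := hcs.exists_mul_self_eq hH hirr
  set ρe := ρ.extendWith hH hs hA hA2
  have hres : ρe.comp H.subtype = ρ := ρ.extendWith_comp_subtype hH hs hA hA2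
  have hirr' : IsIrreducibleRep (ρe.comp H.subtype) := hres ▸ hirr
  exact ⟨ρe, hres, (twistRep_comp_subtype hη1 ρe).trans hres, not_repIso_twistRep hirr' hη1 hη2,
    fun π hπ => eq_or_eq_twistRep_of_comp_subtype_eq hH hη1 hη2 hirr' (hπ.trans hres.symm),
    hres ▸ repIso_indRep_comp_subtype hH hη1 hη2 ρe⟩

/-- Let `G` be a finite group, `H` an index-two subgroup, `s ∈ G - H`, and
`η : G → {±1}` the nontrivial character of `G` trivial on `H`.  If `ρ` is an irreducible
finite-dimensional complex representation of `H` with `ρ^s ≅ ρ`, then `ρ` extends to a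
representation `ρe` of `G`, the twist `η ⊗ ρe` is an extension of `ρ` not isomorphic to
`ρe`, every extension of `ρ` equals `ρe` or `η ⊗ ρe`, and
`Ind_H^G ρ ≅ ρe ⊕ (η ⊗ ρe)`. -/
theorem exists_extension_of_conjIsoSelf {G V : Type} [Group G] [Finite G] [AddCommGroup V]
    [Module ℂ V] [FiniteDimensional ℂ V] (H : Subgroup G) (hH : H.index = 2)
    (s : G) (hs : s ∉ H) (η : G →* ℂˣ) (hη1 : ∀ h ∈ H, η h = 1) (hη2 : η ≠ 1)
    (ρ : Representation ℂ H V) (hirr : IsIrreducibleRep ρ) (hcs : ConjIsoSelf H ρ s) :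
    ∃ ρe : Representation ℂ G V,
      ρe.comp H.subtype = ρ ∧
      (TwistRep η ρe).comp H.subtype = ρ ∧
      ¬ RepIso ρe (TwistRep η ρe) ∧
      (∀ π : Representation ℂ G V, π.comp H.subtype = ρ →
        π = ρe ∨ π = TwistRep η ρe) ∧
      RepIso (IndRep H ρ) (ProdRep ρe (TwistRep η ρe)) :=
  exists_extension_of_conjIsoSelf_general H hH s hs η hη1 hη2 ρ hirr hcs
end

section
/- Let G be a group, H a subgroup of G of index 2, and s an element of G not in H. Let (ρ, V) be an irreducible finite-dimensional complex representation of H that is conjugate-dual, i.e., ρ^s ≅ ρ^∨. Then any two nonzero bilinear forms B on V satisfying B(ρ(h)x, ρ(s·h·s⁻¹)y) = B(x, y) for all h ∈ H and x, y ∈ V are proportional, and the (unique up to scalar) such nondegenerate form satisfies B(x, ρ(s²)y) = ε·B(y, x) for exactly one ε ∈ {1, −1}; that is, ρ is either (1, s)-conjugate-dual or (−1, s)-conjugate-dual, but not both. -/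
open LinearMap

/-- Schur's lemma over ℂ. -/
theorem aux_schur_s12 {K V : Type} [Group K] [AddCommGroup V] [Module ℂ V] [FiniteDimensional ℂ V]
    (ρ : Representation ℂ K V) (hirr : IsIrreducibleRep ρ) (T : V →ₗ[ℂ] V)
    (hT : ∀ (k : K) (x : V), T (ρ k x) = ρ k (T x)) : ∃ c : ℂ, ∀ x, T x = c • x := by
  obtain ⟨hnt, hsub⟩ := hirr
  haveI := hnt
  obtain ⟨c, hc⟩ := Module.End.exists_eigenvalue (T : Module.End ℂ V)
  refine ⟨c, ?_⟩
  have hU := hsub (Module.End.eigenspace T c) ?_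
  · rcases hU with h | h
    · exact absurd h hc
    · intro x
      have hx : x ∈ Module.End.eigenspace T c := h ▸ Submodule.mem_top
      exact Module.End.mem_eigenspace_iff.mp hx
  · intro k x hx
    rw [Module.End.mem_eigenspace_iff] at hx ⊢
    rw [hT, hx, map_smul]

/-- Let `H` be an index-two subgroup of `G`, `s ∈ G - H`, and `ρ` an
irreducible finite-dimensional complex representation of `H` which is conjugate-dual
(`ρ^s ≅ ρ^∨`).  Then any two nonzero bilinear forms `B` with
`B (ρ h x, ρ (s h s⁻¹) y) = B (x, y)` are proportional, and `ρ` is `(1, s)`-conjugate-dual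
or `(-1, s)`-conjugate-dual, but not both. -/
theorem conjDual_bilin_unique_of_irreducible {G V : Type} [Group G] [AddCommGroup V]
    [Module ℂ V] [FiniteDimensional ℂ V] (H : Subgroup G) (hH : H.index = 2)
    (s : G) (hs : s ∉ H) (ρ : Representation ℂ H V) (hirr : IsIrreducibleRep ρ)
    (hcd : ∃ e : V ≃ₗ[ℂ] Module.Dual ℂ V, ∀ (h : H) (hm : s * ↑h * s⁻¹ ∈ H) (x : V),
      e (ρ ⟨s * ↑h * s⁻¹, hm⟩ x) = ρ.dual h (e x)) :
    (∀ B₁ B₂ : LinearMap.BilinForm ℂ V, B₁ ≠ 0 → B₂ ≠ 0 →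
        (∀ (h : H) (hm : s * ↑h * s⁻¹ ∈ H) (x y : V),
          B₁ (ρ h x) (ρ ⟨s * ↑h * s⁻¹, hm⟩ y) = B₁ x y) →
        (∀ (h : H) (hm : s * ↑h * s⁻¹ ∈ H) (x y : V),
          B₂ (ρ h x) (ρ ⟨s * ↑h * s⁻¹, hm⟩ y) = B₂ x y) →
        ∃ c : ℂ, B₂ = c • B₁) ∧
      Xor' (IsConjDual H ρ s 1) (IsConjDual H ρ s (-1)) := by
  classical
  obtain ⟨e, he⟩ := hcd
  have hnt : Nontrivial V := hirr.1
  have hss : s * s ∈ H := Subgroup.mul_self_mem_of_index_two hH s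
  have hconj : ∀ k : G, k ∈ H → s⁻¹ * k * s ∈ H := by
    intro k hk
    rw [Subgroup.mul_mem_iff_of_index_two hH, Subgroup.mul_mem_iff_of_index_two hH]
    simp only [inv_mem_iff (x := s)]
    tauto
  -- the canonical invariant form
  set B₀ : LinearMap.BilinForm ℂ V := (e : V →ₗ[ℂ] Module.Dual ℂ V).flip with hB₀def
  have hB₀apply : ∀ x y : V, B₀ x y = e y x := fun x y => rfl
  have hinvmul : ∀ (h : H) (x : V), ρ h⁻¹ (ρ h x) = x := by
    intro h x
    have h1 : ρ h⁻¹ * ρ h = 1 := by rw [← map_mul, inv_mul_cancel, map_one]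
    calc ρ h⁻¹ (ρ h x) = (ρ h⁻¹ * ρ h) x := rfl
    _ = x := by rw [h1]; rfl
  have hinvmul' : ∀ (h : H) (x : V), ρ h (ρ h⁻¹ x) = x := by
    intro h x
    have h1 : ρ h * ρ h⁻¹ = 1 := by rw [← map_mul, mul_inv_cancel, map_one]
    calc ρ h (ρ h⁻¹ x) = (ρ h * ρ h⁻¹) x := rfl
    _ = x := by rw [h1]; rfl
  have hB₀inv : ∀ (h : H) (hm : s * ↑h * s⁻¹ ∈ H) (x y : V),
      B₀ (ρ h x) (ρ ⟨s * ↑h * s⁻¹, hm⟩ y) = B₀ x y := by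
    intro h hm x y
    rw [hB₀apply, hB₀apply, he h hm y, Representation.dual_apply]
    show (e y) (ρ h⁻¹ (ρ h x)) = e y x
    rw [hinvmul]
  have hB₀nd : B₀.Nondegenerate := by
    refine ⟨?_, ?_⟩
    · intro m hm
      rw [← Module.forall_dual_apply_eq_zero_iff (R := ℂ)]
      intro f
      obtain ⟨y, rfl⟩ := e.surjective f
      exact hm y
    · intro y hy
      apply e.injective
      rw [map_zero]
      ext x
      exact hy x
  -- every invariant form is proportional to B₀
  have key : ∀ B : LinearMap.BilinForm ℂ V,
      (∀ (h : H) (hm : s * ↑h * s⁻¹ ∈ H) (x y : V),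
        B (ρ h x) (ρ ⟨s * ↑h * s⁻¹, hm⟩ y) = B x y) → ∃ c : ℂ, B = c • B₀ := by
    intro B hB
    set T : V →ₗ[ℂ] V := e.symm.toLinearMap ∘ₗ B.flip with hTdef
    have hT : ∀ (k : H) (x : V), T (ρ k x) = ρ k (T x) := by
      intro k x
      apply e.injective
      have hmem : s⁻¹ * ↑k * s ∈ H := hconj ↑k k.2
      obtain ⟨h, hh⟩ : ∃ h : H, (h : G) = s⁻¹ * ↑k * s := ⟨⟨_, hmem⟩, rfl⟩
      have hkh : s * ↑h * s⁻¹ = ↑k := by rw [hh]; group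
      have hm : s * ↑h * s⁻¹ ∈ H := by rw [hkh]; exact k.2
      have hk_eq : (⟨s * ↑h * s⁻¹, hm⟩ : H) = k := Subtype.ext hkh
      have h1 : e (T (ρ k x)) = B.flip (ρ k x) := e.apply_symm_apply _
      have h2 : e (T x) = B.flip x := e.apply_symm_apply _
      have h3 : e (ρ k (T x)) = ρ.dual h (e (T x)) := by
        conv_lhs => rw [← hk_eq]
        exact he h hm (T x)
      rw [h1, h3, h2]
      ext z
      show B z (ρ k x) = (ρ.dual h (B.flip x)) z
      rw [Representation.dual_apply]
      show B z (ρ k x) = B (ρ h⁻¹ z) x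
      conv_lhs => rw [← hinvmul' h z, ← hk_eq]
      exact hB h hm (ρ h⁻¹ z) x
    obtain ⟨c, hc⟩ := aux_schur_s12 ρ hirr T hT
    refine ⟨c, ?_⟩
    ext x y
    have h4 : B.flip y = e (T y) := (e.apply_symm_apply _).symm
    have h5 : B x y = e (T y) x := by rw [← h4]; rfl
    rw [h5, hc y, map_smul]
    show c • (e y) x = (c • B₀) x y
    simp [hB₀apply]
  -- part 1: uniqueness
  have uniq : ∀ B₁ B₂ : LinearMap.BilinForm ℂ V, B₁ ≠ 0 → B₂ ≠ 0 →
      (∀ (h : H) (hm : s * ↑h * s⁻¹ ∈ H) (x y : V),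
        B₁ (ρ h x) (ρ ⟨s * ↑h * s⁻¹, hm⟩ y) = B₁ x y) →
      (∀ (h : H) (hm : s * ↑h * s⁻¹ ∈ H) (x y : V),
        B₂ (ρ h x) (ρ ⟨s * ↑h * s⁻¹, hm⟩ y) = B₂ x y) →
      ∃ c : ℂ, B₂ = c • B₁ := by
    intro B₁ B₂ hne₁ hne₂ hinv₁ hinv₂
    obtain ⟨c₁, hc₁⟩ := key B₁ hinv₁
    obtain ⟨c₂, hc₂⟩ := key B₂ hinv₂
    have hc₁ne : c₁ ≠ 0 := by
      rintro rfl
      exact hne₁ (by rw [hc₁, zero_smul])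
    refine ⟨c₂ / c₁, ?_⟩
    rw [hc₁, hc₂, smul_smul, div_mul_cancel₀ _ hc₁ne]
  refine ⟨uniq, ?_⟩
  -- part 2
  set ρss : V →ₗ[ℂ] V := ρ ⟨s * s, hss⟩ with hρss
  set C : LinearMap.BilinForm ℂ V := B₀.flip ∘ₗ ρss with hCdef
  have hCapply : ∀ x y : V, C x y = B₀ y (ρss x) := fun x y => rfl
  have hs2inv : ∀ a b : V, B₀ (ρss a) (ρss b) = B₀ a b := by
    intro a b
    have hm : s * ↑(⟨s * s, hss⟩ : H) * s⁻¹ ∈ H := by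
      show s * (s * s) * s⁻¹ ∈ H
      have heq : s * (s * s) * s⁻¹ = s * s := by group
      rw [heq]; exact hss
    have step := hB₀inv ⟨s * s, hss⟩ hm a b
    have heq2 : (⟨s * ↑(⟨s * s, hss⟩ : H) * s⁻¹, hm⟩ : H) = ⟨s * s, hss⟩ := by
      apply Subtype.ext
      show s * (s * s) * s⁻¹ = s * s
      group
    rwa [heq2] at step
  have hCinv : ∀ (h : H) (hm : s * ↑h * s⁻¹ ∈ H) (x y : V),
      C (ρ h x) (ρ ⟨s * ↑h * s⁻¹, hm⟩ y) = C x y := by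
    intro h hm x y
    rw [hCapply, hCapply]
    have hm' : s * ↑(⟨s * ↑h * s⁻¹, hm⟩ : H) * s⁻¹ ∈ H := by
      show s * (s * ↑h * s⁻¹) * s⁻¹ ∈ H
      have heq : s * (s * ↑h * s⁻¹) * s⁻¹ = (s * s) * ↑h * (s * s)⁻¹ := by group
      rw [heq]
      exact mul_mem (mul_mem hss h.2) (inv_mem hss)
    have step := hB₀inv ⟨s * ↑h * s⁻¹, hm⟩ hm' y (ρss x)
    have e1 : (⟨s * ↑(⟨s * ↑h * s⁻¹, hm⟩ : H) * s⁻¹, hm'⟩ : H) * ⟨s * s, hss⟩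
        = ⟨s * s, hss⟩ * h := by
      apply Subtype.ext
      show s * (s * ↑h * s⁻¹) * s⁻¹ * (s * s) = s * s * ↑h
      group
    have hcomp : ρ ⟨s * ↑(⟨s * ↑h * s⁻¹, hm⟩ : H) * s⁻¹, hm'⟩ (ρss x) = ρss (ρ h x) := by
      rw [hρss]
      calc ρ ⟨s * ↑(⟨s * ↑h * s⁻¹, hm⟩ : H) * s⁻¹, hm'⟩ (ρ ⟨s * s, hss⟩ x)
          = ρ (⟨s * ↑(⟨s * ↑h * s⁻¹, hm⟩ : H) * s⁻¹, hm'⟩ * ⟨s * s, hss⟩) x := by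
            rw [map_mul]; rfl
      _ = ρ (⟨s * s, hss⟩ * h) x := by rw [e1]
      _ = ρ ⟨s * s, hss⟩ (ρ h x) := by rw [map_mul]; rfl
    rw [hcomp] at step
    exact step
  obtain ⟨δ, hδ⟩ := key C hCinv
  have R : ∀ x y : V, B₀ y (ρss x) = δ * B₀ x y := by
    intro x y
    have h1 : C x y = (δ • B₀) x y := by rw [hδ]
    rw [hCapply] at h1
    simpa using h1
  -- δ² = 1
  obtain ⟨x₀, hx₀⟩ := exists_ne (0 : V)
  obtain ⟨y₀, hy₀⟩ : ∃ y₀ : V, B₀ x₀ y₀ ≠ 0 := by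
    by_contra hcon
    push_neg at hcon
    exact hx₀ (hB₀nd.1 x₀ hcon)
  have hδsq : δ * δ = 1 := by
    have h1 : δ * (δ * B₀ x₀ y₀) = B₀ x₀ y₀ := by
      rw [← R x₀ y₀, ← R y₀ (ρss x₀), hs2inv]
    have h2 : (δ * δ - 1) * B₀ x₀ y₀ = 0 := by linear_combination h1
    rcases mul_eq_zero.mp h2 with h | h
    · have := sub_eq_zero.mp h
      linear_combination this
    · exact absurd h hy₀
  have hδcases : δ = 1 ∨ δ = -1 := mul_self_eq_one_iff.mp hδsq
  have hCD : IsConjDual H ρ s δ := by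
    refine ⟨B₀, hB₀nd, hB₀inv, ?_⟩
    intro hm x y
    show B₀ x (ρss y) = δ * B₀ y x
    exact R y x
  have hnotboth : ¬ (IsConjDual H ρ s 1 ∧ IsConjDual H ρ s (-1)) := by
    rintro ⟨⟨B₁, nd₁, inv₁, sym₁⟩, ⟨B₂, nd₂, inv₂, sym₂⟩⟩
    have hne : ∀ (B : LinearMap.BilinForm ℂ V), B.Nondegenerate → B ≠ 0 := by
      intro B nd hB0
      apply hx₀
      apply nd.1 x₀
      intro n
      rw [hB0]
      rfl
    obtain ⟨c, hc⟩ := uniq B₁ B₂ (hne B₁ nd₁) (hne B₂ nd₂) inv₁ inv₂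
    have hcne : c ≠ 0 := by
      rintro rfl
      exact hne B₂ nd₂ (by rw [hc, zero_smul])
    have hzero : ∀ x y : V, B₁ y x = 0 := by
      intro x y
      have e₁ := sym₁ hss x y
      have e₂ := sym₂ hss x y
      rw [hc] at e₂
      simp only [LinearMap.smul_apply, smul_eq_mul] at e₂
      rw [e₁] at e₂
      have h2 : (2 : ℂ) * (c * B₁ y x) = 0 := by linear_combination e₂
      rcases mul_eq_zero.mp h2 with h | h
      · norm_num at h
      · rcases mul_eq_zero.mp h with h' | h'
        · exact absurd h' hcne
        · exact h'
    apply hx₀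
    apply nd₁.1 x₀
    intro n
    exact hzero n x₀
  rcases hδcases with h1 | h1 <;> rw [h1] at hCD
  · exact Or.inl ⟨hCD, fun hcon => hnotboth ⟨hCD, hcon⟩⟩
  · exact Or.inr ⟨hCD, fun hcon => hnotboth ⟨hcon, hCD⟩⟩
end

section
/- Let G be a group, H a subgroup of G of index 2, ε ∈ {1, −1}, and let s and s' be two elements of G not in H. A finite-dimensional complex representation (ρ, V) of H is (ε, s)-conjugate-dual if and only if it is (ε, s')-conjugate-dual; in other words, the notion of being (ε)-conjugate-dual does not depend on the choice of the element of G outside H. -/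
open LinearMap

private theorem conjDual_mono_aux {G V : Type} [Group G] [AddCommGroup V] [Module ℂ V]
    (H : Subgroup G) (hH : H.index = 2) (ε : ℂ)
    (s s' : G) (hs : s ∉ H) (hs' : s' ∉ H) (ρ : Representation ℂ H V)
    (hcd : IsConjDual H ρ s ε) : IsConjDual H ρ s' ε := by
  obtain ⟨B, hnd, h1, h2⟩ := hcd
  have hsi : s⁻¹ ∉ H := fun h => hs (H.inv_mem_iff.mp h)
  have htm : s' * s⁻¹ ∈ H := by
    rw [Subgroup.mul_mem_iff_of_index_two hH]; simp [hs', hsi]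
  set t : H := ⟨s' * s⁻¹, htm⟩ with ht
  refine ⟨B.compl₂ (ρ t⁻¹), ?_, ?_, ?_⟩
  · refine ⟨fun x hx => ?_, fun y hy => ?_⟩
    · apply hnd.1 x
      intro y
      have := hx ((ρ t) y)
      simpa [← Module.End.mul_apply, ← map_mul] using this
    · have h0 : (ρ t⁻¹) y = 0 := hnd.2 _ (fun x => hy x)
      have := congrArg (ρ t) h0
      simpa [← Module.End.mul_apply, ← map_mul] using this
  · intro h hm x y
    have hm' : s * ↑h * s⁻¹ ∈ H := by
      rw [Subgroup.mul_mem_iff_of_index_two hH, Subgroup.mul_mem_iff_of_index_two hH]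
      simp [hs, hsi, h.2]
    have key : (t⁻¹ * ⟨s' * ↑h * s'⁻¹, hm⟩ : H) = ⟨s * ↑h * s⁻¹, hm'⟩ * t⁻¹ := by
      ext
      simp only [Subgroup.coe_mul, Subgroup.coe_inv, ht]
      group
    simp only [LinearMap.compl₂_apply, ← Module.End.mul_apply, ← map_mul, key]
    simp only [map_mul, Module.End.mul_apply]
    exact h1 h hm' x ((ρ t⁻¹) y)
  · intro hm x y
    have hcm : s * (s' * s⁻¹) * s⁻¹ ∈ H := by
      rw [Subgroup.mul_mem_iff_of_index_two hH, Subgroup.mul_mem_iff_of_index_two hH]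
      simp [hs, hsi, htm]
    have hsm : s * s ∈ H := Subgroup.mul_self_mem_of_index_two hH s
    have key : (t⁻¹ * ⟨s' * s', hm⟩ : H) = ⟨s * (s' * s⁻¹) * s⁻¹, hcm⟩ * ⟨s * s, hsm⟩ := by
      ext
      simp only [Subgroup.coe_mul, Subgroup.coe_inv, ht]
      group
    simp only [LinearMap.compl₂_apply, ← Module.End.mul_apply, ← map_mul, key]
    simp only [map_mul, Module.End.mul_apply]
    have e1 : B x ((ρ ⟨s * (↑t : G) * s⁻¹, hcm⟩) ((ρ ⟨s * s, hsm⟩) y))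
        = B ((ρ t⁻¹) x) ((ρ ⟨s * s, hsm⟩) y) := by
      have := h1 t hcm ((ρ t⁻¹) x) ((ρ ⟨s * s, hsm⟩) y)
      rw [← this]
      congr 1
      simp [← Module.End.mul_apply, ← map_mul]
    rw [e1, h2 hsm]

/-- For `H` an index-two subgroup of `G`, `ε ∈ {1, -1}`, and `s, s' ∈ G - H`,
a finite-dimensional complex representation `ρ` of `H` is `(ε, s)`-conjugate-dual if and
only if it is `(ε, s')`-conjugate-dual: the notion does not depend on the choice of the
element of `G` outside `H`. -/
theorem isConjDual_indep_of_choice {G V : Type} [Group G] [AddCommGroup V] [Module ℂ V]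
    [FiniteDimensional ℂ V] (H : Subgroup G) (hH : H.index = 2) (ε : ℂ)
    (hε : ε = 1 ∨ ε = -1) (s s' : G) (hs : s ∉ H) (hs' : s' ∉ H)
    (ρ : Representation ℂ H V) :
    IsConjDual H ρ s ε ↔ IsConjDual H ρ s' ε := by
  exact ⟨conjDual_mono_aux H hH ε s s' hs hs' ρ, conjDual_mono_aux H hH ε s' s hs' hs ρ⟩
end
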